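/- arXiv:math/9910060 — 6 statements merged into one kernel-verified Lean document; each statement's English description precedes it below -/
import Mathlib

section
/- The smallest submonoid Ψ_0 of ℤ^n that is stable under the semisymmetric group W (permutations π of {1,…,n} with π(i) ≡ i mod 2) and contains all partitions (weakly decreasing tuples of nonnegative integers) equals the submonoid generated by the set {ε_i : i odd} ∪ {ε_i + ε_j : i odd, j even}, where ε_i denotes the i-th standard basis vector. -/
open Finset

/-- A permutation of `{1,…,n}` is parity preserving (`π(i) ≡ i mod 2`). -/
def ParityPerm {n : ℕ} (π : Equiv.Perm (Fin n)) : Prop :=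
  ∀ i : Fin n, ((π i : ℕ)) % 2 = (i : ℕ) % 2

/-- Partitions inside `ℤ^n`: weakly decreasing tuples of nonnegative integers. -/
def PartSet (n : ℕ) : Set (Fin n → ℤ) :=
  {lam | (∀ i j : Fin n, i ≤ j → lam j ≤ lam i) ∧ ∀ i, 0 ≤ lam i}

/-- `Ψ_0`: the smallest `W`-stable additive submonoid of `ℤ^n` containing all partitions. -/
noncomputable def Psi0 (n : ℕ) : AddSubmonoid (Fin n → ℤ) :=
  sInf {S | PartSet n ⊆ S ∧
    ∀ π : Equiv.Perm (Fin n), ParityPerm π → ∀ x ∈ S, (fun i => x (π i)) ∈ S}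

/-! The closure `M` of the generators is stable under `W`, since `W` permutes the generators.
It contains every partition `λ`: writing `1ᵏ = ε₁ + ⋯ + εₖ`, one has
`λ = ∑ₖ (λₖ - λₖ₊₁) • 1ᵏ` with nonnegative coefficients, and `1ᵏ` is a sum of pairs
`ε₂ₘ₋₁ + ε₂ₘ`, plus `εₖ` when `k` is odd. Hence `Ψ₀ ≤ M`. Conversely `ε₁ = 1¹` and
`ε₁ + ε₂ = 1²` are partitions, and every generator is a `W`-translate of one of them. -/

def IsParityPermInvariant {n : ℕ} (S : AddSubmonoid (Fin n → ℤ)) : Prop :=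
  ∀ π : Equiv.Perm (Fin n), ParityPerm π → ∀ x ∈ S, (fun i => x (π i)) ∈ S

def prefixOnes (n k : ℕ) : Fin n → ℤ := fun i => if (i : ℕ) < k then 1 else 0

def psi0Generators (n : ℕ) : Set (Fin n → ℤ) :=
  {v | ∃ i : Fin n, Even (i : ℕ) ∧ v = Pi.single i 1} ∪
  {v | ∃ i j : Fin n, Even (i : ℕ) ∧ Odd (j : ℕ) ∧ v = Pi.single i 1 + Pi.single j 1}

section ParityPerm

variable {n : ℕ} {π : Equiv.Perm (Fin n)}

lemma parityPerm_swap {a b : Fin n} (h : (a : ℕ) % 2 = (b : ℕ) % 2) :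
    ParityPerm (Equiv.swap a b) := by
  intro i
  rcases eq_or_ne i a with rfl | hia
  · rw [Equiv.swap_apply_left]; exact h.symm
  rcases eq_or_ne i b with rfl | hib
  · rw [Equiv.swap_apply_right]; exact h
  · rw [Equiv.swap_apply_of_ne_of_ne hia hib]

lemma ParityPerm.symm (hπ : ParityPerm π) : ParityPerm π.symm := fun i => by
  simpa using (hπ (π.symm i)).symm

lemma ParityPerm.mul {σ : Equiv.Perm (Fin n)} (hπ : ParityPerm π) (hσ : ParityPerm σ) :
    ParityPerm (π * σ) := fun i => (hπ (σ i)).trans (hσ i)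

lemma ParityPerm.even_iff (hπ : ParityPerm π) (i : Fin n) : Even (π i : ℕ) ↔ Even (i : ℕ) := by
  rw [Nat.even_iff, Nat.even_iff, hπ i]

lemma ParityPerm.odd_iff (hπ : ParityPerm π) (i : Fin n) : Odd (π i : ℕ) ↔ Odd (i : ℕ) := by
  rw [← Nat.not_even_iff_odd, ← Nat.not_even_iff_odd, hπ.even_iff]

end ParityPerm

section Psi0

variable {n : ℕ}

lemma Psi0_le {S : AddSubmonoid (Fin n → ℤ)} (hP : PartSet n ⊆ S)
    (hS : IsParityPermInvariant S) : Psi0 n ≤ S :=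
  sInf_le ⟨hP, hS⟩

lemma partSet_subset_Psi0 : PartSet n ⊆ Psi0 n := fun _ hx =>
  AddSubmonoid.mem_sInf.2 fun _ hS => hS.1 hx

lemma isParityPermInvariant_Psi0 : IsParityPermInvariant (Psi0 n) := fun π hπ _ hx =>
  AddSubmonoid.mem_sInf.2 fun _ hS => hS.2 π hπ _ (AddSubmonoid.mem_sInf.1 hx _ hS)

end Psi0

section prefixOnes

variable {n : ℕ}

lemma prefixOnes_mem_partSet (k : ℕ) : prefixOnes n k ∈ PartSet n := by
  refine ⟨fun i j hij => ?_, fun i => ?_⟩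
  · rw [Fin.le_def] at hij
    simp only [prefixOnes]
    split_ifs <;> omega
  · simp only [prefixOnes]
    split_ifs <;> omega

lemma prefixOnes_zero : prefixOnes n 0 = 0 := by
  ext i; simp [prefixOnes]

lemma prefixOnes_one (hn : 0 < n) : prefixOnes n 1 = Pi.single ⟨0, hn⟩ 1 := by
  ext i
  simp only [prefixOnes, Pi.single_apply, Fin.ext_iff]
  split_ifs <;> omega

lemma prefixOnes_add_two {m : ℕ} (h : m + 1 < n) :
    prefixOnes n (m + 2) =
      prefixOnes n m + (Pi.single ⟨m, by omega⟩ 1 + Pi.single ⟨m + 1, h⟩ 1) := by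
  ext i
  simp only [prefixOnes, Pi.add_apply, Pi.single_apply, Fin.ext_iff]
  split_ifs <;> omega

lemma prefixOnes_succ_of_le {k : ℕ} (h : n ≤ k) : prefixOnes n (k + 1) = prefixOnes n k := by
  ext i
  have := i.isLt
  simp only [prefixOnes]
  split_ifs <;> omega

lemma prefixOnes_mem_closure_psi0Generators (k : ℕ) :
    prefixOnes n k ∈ AddSubmonoid.closure (psi0Generators n) := by
  induction k using Nat.twoStepInduction with
  | zero => rw [prefixOnes_zero]; exact zero_mem _
  | one =>
    rcases Nat.eq_zero_or_pos n with rfl | hn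
    · rw [Subsingleton.elim (prefixOnes 0 1) 0]; exact zero_mem _
    · rw [prefixOnes_one hn]
      exact AddSubmonoid.subset_closure (Or.inl ⟨_, ⟨0, rfl⟩, rfl⟩)
  | more m ihm ihm1 =>
    by_cases h : m + 1 < n
    · rw [prefixOnes_add_two h]
      refine add_mem ihm (AddSubmonoid.subset_closure (Or.inr ?_))
      rcases Nat.even_or_odd m with he | ho
      · exact ⟨_, _, he, he.add_one, rfl⟩
      · exact ⟨_, _, ho.add_one, ho, add_comm _ _⟩
    · rw [prefixOnes_succ_of_le (by omega)]
      exact ihm1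

lemma partSet_sub_smul_prefixOnes {k : ℕ} {lam : Fin n → ℤ} (hlam : lam ∈ PartSet n)
    (hk : k < n) (hsupp : ∀ i : Fin n, k < (i : ℕ) → lam i = 0) :
    lam - lam ⟨k, hk⟩ • prefixOnes n (k + 1) ∈ PartSet n ∧
      ∀ i : Fin n, k ≤ (i : ℕ) → (lam - lam ⟨k, hk⟩ • prefixOnes n (k + 1)) i = 0 := by
  obtain ⟨hdec, hnonneg⟩ := hlam
  have hge : ∀ i : Fin n, (i : ℕ) ≤ k → lam ⟨k, hk⟩ ≤ lam i := fun i hi => hdec _ _ hi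
  simp only [PartSet, Set.mem_ofPred_eq, Pi.sub_apply, Pi.smul_apply, prefixOnes, smul_eq_mul]
  refine ⟨⟨fun i j hij => ?_, fun i => ?_⟩, fun i hi => ?_⟩
  · rw [Fin.le_def] at hij
    have := hdec i j hij
    have := hsupp j
    have := hge i
    split_ifs <;> omega
  · have := hnonneg i
    have := hge i
    split_ifs <;> omega
  · obtain rfl | hki : i = ⟨k, hk⟩ ∨ k < (i : ℕ) := by rw [Fin.ext_iff]; simp only; omega
    · simp
    · have := hsupp i hki
      split_ifs <;> omega

lemma partSet_subset_of_prefixOnes_mem {S : AddSubmonoid (Fin n → ℤ)}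
    (hS : ∀ k, prefixOnes n k ∈ S) : PartSet n ⊆ S := by
  suffices h : ∀ k, ∀ lam ∈ PartSet n, (∀ i : Fin n, k ≤ (i : ℕ) → lam i = 0) → lam ∈ S from
    fun lam hlam => h n lam hlam fun i hi => absurd i.isLt (by omega)
  intro k
  induction k with
  | zero =>
    intro lam _ hsupp
    rw [show lam = 0 from funext fun i => hsupp i (Nat.zero_le _)]
    exact zero_mem _
  | succ k ih =>
    intro lam hlam hsupp
    by_cases hk : k < n
    · obtain ⟨hrest, hrest_supp⟩ := partSet_sub_smul_prefixOnes hlam hk hsupp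
      obtain ⟨c, hc⟩ := Int.eq_ofNat_of_zero_le (hlam.2 ⟨k, hk⟩)
      rw [← sub_add_cancel lam (lam ⟨k, hk⟩ • prefixOnes n (k + 1))]
      refine add_mem (ih _ hrest hrest_supp) ?_
      rw [hc, natCast_zsmul]
      exact nsmul_mem (hS _) c
    · exact ih lam hlam fun i _ => absurd i.isLt (by omega)

end prefixOnes

lemma isParityPermInvariant_closure_psi0Generators {n : ℕ} :
    IsParityPermInvariant (AddSubmonoid.closure (psi0Generators n)) := by
  intro π hπ x hx
  induction hx using AddSubmonoid.closure_induction with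
  | mem y hy =>
    apply AddSubmonoid.subset_closure
    rcases hy with ⟨a, ha, rfl⟩ | ⟨a, b, ha, hb, rfl⟩
    · exact Or.inl ⟨π.symm a, (hπ.symm.even_iff a).2 ha, Pi.single_comp_equiv π a 1⟩
    · refine Or.inr ⟨π.symm a, π.symm b, (hπ.symm.even_iff a).2 ha, (hπ.symm.odd_iff b).2 hb, ?_⟩
      ext k
      simp [Pi.single_apply, Equiv.eq_symm_apply]
  | zero => exact zero_mem _
  | add x y _ _ hx hy => exact add_mem hx hy

section Psi0Generators

variable {n : ℕ}

lemma single_apply_perm (π : Equiv.Perm (Fin n)) (a k : Fin n) :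
    (Pi.single (π a) 1 : Fin n → ℤ) (π k) = (Pi.single a 1 : Fin n → ℤ) k := by
  simp [Pi.single_apply]

lemma single_mem_Psi0 {i : Fin n} (hi : Even (i : ℕ)) : Pi.single i 1 ∈ Psi0 n := by
  have h0 : 0 < n := i.pos
  let π := Equiv.swap i ⟨0, h0⟩
  have hπ : ParityPerm π := parityPerm_swap (by simpa using Nat.even_iff.1 hi)
  have hpart : Pi.single (π i) 1 ∈ Psi0 n := by
    rw [Equiv.swap_apply_left, ← prefixOnes_one h0]
    exact partSet_subset_Psi0 (prefixOnes_mem_partSet 1)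
  simpa only [single_apply_perm] using isParityPermInvariant_Psi0 π hπ _ hpart

lemma single_add_single_mem_Psi0 {i j : Fin n} (hi : Even (i : ℕ)) (hj : Odd (j : ℕ)) :
    Pi.single i 1 + Pi.single j 1 ∈ Psi0 n := by
  have hi2 := Nat.even_iff.1 hi
  have hj2 := Nat.odd_iff.1 hj
  have h1 : 1 < n := by omega
  let o : Fin n := ⟨0, by omega⟩
  let e : Fin n := ⟨1, h1⟩
  have hoj : o ≠ j := Fin.ne_of_val_ne (by simp only [o]; omega)
  have hoe : o ≠ e := Fin.ne_of_val_ne (by simp [o, e])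
  have hji : j ≠ i := Fin.ne_of_val_ne (by omega)
  let π := Equiv.swap j e * Equiv.swap i o
  have hπ : ParityPerm π :=
    (parityPerm_swap (by simp only [e]; omega)).mul (parityPerm_swap (by simp only [o]; omega))
  have hπi : π i = o := by
    rw [Equiv.Perm.mul_apply, Equiv.swap_apply_left, Equiv.swap_apply_of_ne_of_ne hoj hoe]
  have hπj : π j = e := by
    rw [Equiv.Perm.mul_apply, Equiv.swap_apply_of_ne_of_ne hji hoj.symm, Equiv.swap_apply_left]
  have hpart : Pi.single (π i) 1 + Pi.single (π j) 1 ∈ Psi0 n := by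
    rw [hπi, hπj, ← zero_add (_ + _), ← prefixOnes_zero, ← prefixOnes_add_two h1]
    exact partSet_subset_Psi0 (prefixOnes_mem_partSet 2)
  have h := isParityPermInvariant_Psi0 π hπ _ hpart
  simp only [Pi.add_apply, single_apply_perm] at h
  exact h

lemma psi0Generators_subset_Psi0 : psi0Generators n ⊆ Psi0 n := by
  rintro _ (⟨i, hi, rfl⟩ | ⟨i, j, hi, hj, rfl⟩)
  exacts [single_mem_Psi0 hi, single_add_single_mem_Psi0 hi hj]

end Psi0Generators

theorem Psi0_eq_closure_general (n : ℕ) :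
    Psi0 n = AddSubmonoid.closure
      ({v | ∃ i : Fin n, Even (i : ℕ) ∧ v = Pi.single i 1} ∪
       {v | ∃ i j : Fin n, Even (i : ℕ) ∧ Odd (j : ℕ) ∧
          v = Pi.single i 1 + Pi.single j 1}) :=
  le_antisymm
    (Psi0_le (partSet_subset_of_prefixOnes_mem prefixOnes_mem_closure_psi0Generators)
      isParityPermInvariant_closure_psi0Generators)
    (AddSubmonoid.closure_le.2 psi0Generators_subset_Psi0)

/-- `Ψ_0` is generated by the `ε_i` with `i` odd (1-based; 0-based even here) together with
the `ε_i + ε_j` with `i` odd and `j` even (1-based). -/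
theorem Psi0_eq_closure (n : ℕ) (hn : 1 ≤ n) :
    Psi0 n = AddSubmonoid.closure
      ({v | ∃ i : Fin n, Even (i : ℕ) ∧ v = Pi.single i 1} ∪
       {v | ∃ i j : Fin n, Even (i : ℕ) ∧ Odd (j : ℕ) ∧
          v = Pi.single i 1 + Pi.single j 1}) :=
  Psi0_eq_closure_general n
end

section
/- For partitions μ, λ of length n, if λ − μ ∈ Ψ_1 (i.e., μ ⪯ λ) then [μ]_1 + … + [μ]_m ≤ [λ]_1 + … + [λ]_m for all m = 1,…,n (i.e., [μ] ≤ [λ] in the dominance order on ℕ^n). -/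
/-! Each prefix sum `v ↦ ∑_{k ≤ m} [v]_k` is additive, so it suffices that it is nonnegative on
the generators of `Ψ_1`. Its value on `ε_a` is `(-1)^a` times the alternating sum `1 - 1 + 1 - ⋯`
with `min m a + 1` terms, which is `0` or `1`. So it is nonnegative on `ε_a` for even `a`, and on
`ε_i - ε_{i+2}` and `ε_a + ε_{a+1}` the two alternating sums cancel up to a final `+1`. -/


open Finset

/-- `[λ]_m := ∑_{k=m}^{n} (−1)^{k−m} λ_k` (0-based indices). -/
noncomputable def brk {n : ℕ} (lam : Fin n → ℤ) (m : Fin n) : ℤ :=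
  ∑ k ∈ Finset.univ.filter (fun k : Fin n => m ≤ k), (-1) ^ ((k : ℕ) - (m : ℕ)) * lam k

/-- `Ψ_1`, generated by the simple roots `ε_i − ε_{i+2}` together with
`ε_{n−1} + ε_n` and `ε_{2⌈n/2⌉−1}` (the largest odd 1-based index,
0-based `2*((n-1)/2)`). -/
noncomputable def Psi1 (n : ℕ) (hn : 2 ≤ n) : AddSubmonoid (Fin n → ℤ) :=
  AddSubmonoid.closure
    ({v | ∃ i : ℕ, ∃ h : i + 2 < n,
        v = Pi.single (⟨i, by omega⟩ : Fin n) 1 - Pi.single (⟨i + 2, h⟩ : Fin n) 1} ∪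
      {Pi.single (⟨n - 2, by omega⟩ : Fin n) 1 + Pi.single (⟨n - 1, by omega⟩ : Fin n) 1,
       Pi.single (⟨2 * ((n - 1) / 2), by omega⟩ : Fin n) 1})

lemma neg_one_pow_sub_of_le {R : Type*} [CommRing R] {a k : ℕ} (h : k ≤ a) :
    (-1 : R) ^ (a - k) = (-1) ^ a * (-1) ^ k := by
  obtain ⟨j, rfl⟩ := Nat.exists_eq_add_of_le h
  rw [Nat.add_sub_cancel_left, pow_add, mul_comm, ← mul_assoc, ← pow_add, ← two_mul, pow_mul]
  norm_num

/-- The coefficient of `v a` in `∑_{k ≤ m} [v]_k`. -/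
def prefixCoeff (m a : ℕ) : ℤ := (-1) ^ a * ∑ k ∈ range (min m a + 1), (-1) ^ k

lemma prefixCoeff_add_two_le (m i : ℕ) : prefixCoeff m (i + 2) ≤ prefixCoeff m i := by
  have hsq : (-1 : ℤ) ^ i * (-1) ^ i = 1 := by rw [← mul_pow]; norm_num
  unfold prefixCoeff
  rcases le_or_gt m i with h | h
  · rw [min_eq_left h, min_eq_left (by omega), pow_add]
    norm_num
  rw [min_eq_right h.le]
  rcases (by omega : m = i + 1 ∨ i + 2 ≤ m) with rfl | h
  · rw [min_eq_left (by omega)]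
    simp only [sum_range_succ, pow_succ]
    nlinarith
  · rw [min_eq_right h]
    simp only [sum_range_succ, pow_succ]
    nlinarith

lemma prefixCoeff_add_prefixCoeff_succ_nonneg (m a : ℕ) :
    0 ≤ prefixCoeff m a + prefixCoeff m (a + 1) := by
  have hsq : (-1 : ℤ) ^ a * (-1) ^ a = 1 := by rw [← mul_pow]; norm_num
  unfold prefixCoeff
  rcases le_or_gt m a with h | h
  · rw [min_eq_left h, min_eq_left (by omega), pow_succ]
    linarith
  · rw [min_eq_right h.le, min_eq_right h]
    simp only [sum_range_succ, pow_succ]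
    nlinarith

lemma prefixCoeff_nonneg_of_even (m : ℕ) {p : ℕ} (hp : Even p) : 0 ≤ prefixCoeff m p := by
  rw [prefixCoeff, hp.neg_one_pow, one_mul, neg_one_geom_sum]
  split_ifs <;> norm_num

section

variable {n : ℕ}

noncomputable def brkPrefixSum (m : Fin n) : (Fin n → ℤ) →+ ℤ where
  toFun v := ∑ k ∈ univ.filter (· ≤ m), brk v k
  map_zero' := by simp [brk]
  map_add' u w := by simp only [brk, Pi.add_apply, mul_add, sum_add_distrib]

lemma brkPrefixSum_apply (m : Fin n) (v : Fin n → ℤ) :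
    brkPrefixSum m v = ∑ k ∈ univ.filter (· ≤ m), brk v k :=
  rfl

lemma brk_single (a k : Fin n) :
    brk (Pi.single a 1) k = if k ≤ a then (-1) ^ ((a : ℕ) - k) else 0 := by
  simp [brk, Pi.single_apply]

lemma brkPrefixSum_single (m a : Fin n) :
    brkPrefixSum m (Pi.single a 1) = prefixCoeff m a := by
  calc brkPrefixSum m (Pi.single a 1) = ∑ k ∈ Iic (min m a), (-1) ^ ((a : ℕ) - k) := by
        simp only [brkPrefixSum_apply, brk_single]
        rw [← sum_filter, filter_filter]
        congr 1
        ext k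
        simp
    _ = ∑ k ∈ Iic (min (m : ℕ) a), (-1) ^ ((a : ℕ) - k) := by
        rw [← Fin.coe_min, ← Fin.map_valEmbedding_Iic, sum_map]; rfl
    _ = prefixCoeff m a := by
        rw [prefixCoeff, Nat.range_succ_eq_Iic, mul_sum]
        exact sum_congr rfl fun k hk =>
          neg_one_pow_sub_of_le ((mem_Iic.1 hk).trans (min_le_right _ _))

lemma Psi1_le_comap_brkPrefixSum (hn : 2 ≤ n) (m : Fin n) :
    Psi1 n hn ≤ (AddSubmonoid.nonneg ℤ).comap (brkPrefixSum m) := by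
  rw [Psi1, AddSubmonoid.closure_le]
  rintro v (⟨i, hi, rfl⟩ | rfl | rfl) <;>
    simp only [SetLike.mem_coe, AddSubmonoid.mem_comap, AddSubmonoid.mem_nonneg, map_sub, map_add,
      brkPrefixSum_single, sub_nonneg]
  · exact prefixCoeff_add_two_le m i
  · rw [show n - 1 = n - 2 + 1 by omega]
    exact prefixCoeff_add_prefixCoeff_succ_nonneg m (n - 2)
  · exact prefixCoeff_nonneg_of_even m (even_two_mul _)

end

theorem brk_dominance_of_preceq_general (n : ℕ) (hn : 2 ≤ n) (mu lam : Fin n → ℤ)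
    (h : lam - mu ∈ Psi1 n hn) :
    ∀ m : Fin n,
      ∑ k ∈ Finset.univ.filter (fun k : Fin n => k ≤ m), brk mu k ≤
        ∑ k ∈ Finset.univ.filter (fun k : Fin n => k ≤ m), brk lam k := by
  intro m
  have hnonneg := Psi1_le_comap_brkPrefixSum hn m h
  rwa [AddSubmonoid.mem_comap, AddSubmonoid.mem_nonneg, map_sub, sub_nonneg] at hnonneg

/-- If `μ ⪯ λ` (i.e. `λ − μ ∈ Ψ_1`) for partitions `μ, λ`, then `[μ] ≤ [λ]` in the
dominance order on `ℕ^n`. -/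
theorem brk_dominance_of_preceq (n : ℕ) (hn : 2 ≤ n) (mu lam : Fin n → ℤ)
    (hmu : (∀ i j : Fin n, i ≤ j → mu j ≤ mu i) ∧ ∀ i, 0 ≤ mu i)
    (hlam : (∀ i j : Fin n, i ≤ j → lam j ≤ lam i) ∧ ∀ i, 0 ≤ lam i)
    (h : lam - mu ∈ Psi1 n hn) :
    ∀ m : Fin n,
      ∑ k ∈ Finset.univ.filter (fun k : Fin n => k ≤ m), brk mu k ≤
        ∑ k ∈ Finset.univ.filter (fun k : Fin n => k ≤ m), brk lam k :=
  brk_dominance_of_preceq_general n hn mu lam h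
end

section
/- Define the relation λ ⊑ μ on partitions of length n by: λ_i ≤ μ_i for all i and [λ]_1 ≤ [μ]_1. Then for n = 3, the partitions (1,0,0) and (1,1,0) are both ⊑ (2,1,0) and both ⊑ (1,1,1), but there is no partition ν with (1,0,0) ⊑ ν, (1,1,0) ⊑ ν, and ν ⊑ (2,1,0), ν ⊑ (1,1,1); in particular (1,0,0) and (1,1,0) have no least upper bound with respect to ⊑, so ⊑ is not a lattice order. -/
/-- Partitions of length 3. -/
def IsPartition3 (a : ℤ × ℤ × ℤ) : Prop :=
  a.2.1 ≤ a.1 ∧ a.2.2 ≤ a.2.1 ∧ 0 ≤ a.2.2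

/-- `[λ]_1 = λ_1 − λ_2 + λ_3`. -/
def br1 (a : ℤ × ℤ × ℤ) : ℤ := a.1 - a.2.1 + a.2.2

/-- The order `λ ⊑ μ`: containment together with `[λ]_1 ≤ [μ]_1`. -/
def SqSub (a b : ℤ × ℤ × ℤ) : Prop :=
  a.1 ≤ b.1 ∧ a.2.1 ≤ b.2.1 ∧ a.2.2 ≤ b.2.2 ∧ br1 a ≤ br1 b

/-!
Containment alone pins down any `ν` with `(1,1,0) ⊑ ν ⊑ (2,1,0), (1,1,1)`: in the product order
`(1,1,0) ≤ ν ≤ (2,1,0) ⊓ (1,1,1) = (1,1,0)`, so `ν = (1,1,0)`. But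
`[(1,0,0)]_1 = 1 > 0 = [(1,1,0)]_1`, so `(1,0,0) ⋢ ν`. A least upper bound of `(1,0,0)` and `(1,1,0)`
would be such a `ν`, being below both upper bounds.
-/

theorem not_exists_lub_of_not_exists_between {α : Type*} (r : α → α → Prop) (p : α → Prop)
    {a b u v : α} (hu : p u) (hv : p v) (hau : r a u) (hbu : r b u) (hav : r a v) (hbv : r b v)
    (h : ¬ ∃ ν, p ν ∧ r a ν ∧ r b ν ∧ r ν u ∧ r ν v) :
    ¬ ∃ ν, p ν ∧ r a ν ∧ r b ν ∧ ∀ τ, p τ → r a τ → r b τ → r ν τ := by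
  rintro ⟨ν, hν, haν, hbν, hlub⟩
  exact h ⟨ν, hν, haν, hbν, hlub u hu hau hbu, hlub v hv hav hbv⟩

instance : DecidablePred IsPartition3 := fun a => by unfold IsPartition3; infer_instance

instance : DecidableRel SqSub := fun a b => by unfold SqSub; infer_instance

theorem SqSub.le {a b : ℤ × ℤ × ℤ} (h : SqSub a b) : a ≤ b :=
  ⟨h.1, h.2.1, h.2.2.1⟩

theorem eq_of_sqSub_of_sqSub_of_sqSub {ν : ℤ × ℤ × ℤ} (h₁ : SqSub (1, 1, 0) ν)
    (h₂ : SqSub ν (2, 1, 0)) (h₃ : SqSub ν (1, 1, 1)) : ν = (1, 1, 0) := by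
  have hinf : ((2, 1, 0) ⊓ (1, 1, 1) : ℤ × ℤ × ℤ) = (1, 1, 0) := by decide
  exact le_antisymm (hinf ▸ le_inf h₂.le h₃.le) h₁.le

theorem not_exists_sqSub_between :
    ¬ ∃ ν : ℤ × ℤ × ℤ, IsPartition3 ν ∧ SqSub (1, 0, 0) ν ∧ SqSub (1, 1, 0) ν ∧
        SqSub ν (2, 1, 0) ∧ SqSub ν (1, 1, 1) := by
  rintro ⟨ν, -, h₀, h₁, h₂, h₃⟩
  rw [eq_of_sqSub_of_sqSub_of_sqSub h₁ h₂ h₃] at h₀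
  exact absurd h₀ (by decide)

/-- `(1,0,0)` and `(1,1,0)` are both `⊑ (2,1,0)` and `⊑ (1,1,1)`, but no partition `ν`
lies between them; in particular `(1,0,0)` and `(1,1,0)` have no least upper bound for
`⊑`, so `⊑` is not a lattice order. -/
theorem sqsub_not_lattice :
    SqSub (1, 0, 0) (2, 1, 0) ∧ SqSub (1, 0, 0) (1, 1, 1) ∧
    SqSub (1, 1, 0) (2, 1, 0) ∧ SqSub (1, 1, 0) (1, 1, 1) ∧
    (¬ ∃ ν : ℤ × ℤ × ℤ, IsPartition3 ν ∧ SqSub (1, 0, 0) ν ∧ SqSub (1, 1, 0) ν ∧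
        SqSub ν (2, 1, 0) ∧ SqSub ν (1, 1, 1)) ∧
    (¬ ∃ ν : ℤ × ℤ × ℤ, IsPartition3 ν ∧ SqSub (1, 0, 0) ν ∧ SqSub (1, 1, 0) ν ∧
        ∀ τ : ℤ × ℤ × ℤ, IsPartition3 τ → SqSub (1, 0, 0) τ → SqSub (1, 1, 0) τ →
          SqSub ν τ) := by
  have h₁ : SqSub (1, 0, 0) (2, 1, 0) := by decide
  have h₂ : SqSub (1, 0, 0) (1, 1, 1) := by decide
  have h₃ : SqSub (1, 1, 0) (2, 1, 0) := by decide
  have h₄ : SqSub (1, 1, 0) (1, 1, 1) := by decide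
  refine ⟨h₁, h₂, h₃, h₄, not_exists_sqSub_between, ?_⟩
  exact not_exists_lub_of_not_exists_between SqSub IsPartition3 (by decide) (by decide)
    h₁ h₃ h₂ h₄ not_exists_sqSub_between
end

section
/- Let f(z) be a W-invariant polynomial in z_1,…,z_n (W the parity-preserving permutation group) and suppose f = g^+ + e·h where e(z) := ∏_{i : n−i even} z_i, g is a W'-invariant polynomial in n−1 variables pulled back via the elementary semisymmetric generators, and h is W-invariant. Then this decomposition is unique, and deg g ≤ deg f, deg h ≤ deg f − ⌈n/2⌉. -/
open Finset MvPolynomial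

variable (k : Type*) [Field k] [CharZero k] (n : ℕ)

/-- Elementary symmetric polynomial of degree `m` in the variables indexed by `S`. -/
noncomputable def esymS (S : Finset (Fin n)) (m : ℕ) : MvPolynomial (Fin n) k :=
  ∑ T ∈ S.powersetCard m, ∏ i ∈ T, X i

/-- Odd-position variables (1-based odd = 0-based even). -/
def oddVars : Finset (Fin n) := Finset.univ.filter (fun i => Even (i : ℕ))

/-- Even-position variables. -/
def evenVars : Finset (Fin n) := Finset.univ.filter (fun i => Odd (i : ℕ))

/-- `e(z) = ∏_{i : n−i even} z_i` (1-based; 0-based: `i ≡ n−1 mod 2`), of degree `⌈n/2⌉`. -/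
noncomputable def eProd : MvPolynomial (Fin n) k :=
  ∏ i ∈ Finset.univ.filter (fun i : Fin n => (i : ℕ) % 2 = (n - 1) % 2), X i

/-- The subalgebra generated by the elementary semisymmetric generators other than `e`;
this is the image of the ring of invariants in `n−1` variables under `g ↦ g⁺`. -/
noncomputable def lowerInvariants : Subalgebra k (MvPolynomial (Fin n) k) :=
  Algebra.adjoin k
    (({p | ∃ m : ℕ, 1 ≤ m ∧ m ≤ (n + 1) / 2 ∧ p = esymS k n (oddVars n) m} ∪
      {p | ∃ m : ℕ, 1 ≤ m ∧ m ≤ n / 2 ∧ p = esymS k n (evenVars n) m}) \ {eProd k n})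

/-!
Let `B` be the set of variables occurring in `e` and `A` the remaining ones, so that the lower
invariants are generated by `e₁(A), …, e_{|A|}(A)` and `e₁(B), …, e_{|B|-1}(B)`. No nonzero
element of this algebra is divisible by `e`: setting one variable `z_j` of `B` to zero kills `e`
but sends the generators to the elementary symmetric polynomials of `A` and of `B ∖ {j}`, which are
algebraically independent. Applied to `g₁ - g₂ = e (h₂ - h₁)` this gives uniqueness. The algebra
is generated by homogeneous elements, so it contains the homogeneous components of its elements;
a component of `g` of degree above `deg f` is minus the corresponding component of `e h`, hence
divisible by `e` and zero. So `deg g ≤ deg f`, and then `deg e + deg h = deg (f - g) ≤ deg f`.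
-/

namespace MvPolynomial

section Homogeneous

variable {σ R : Type*} [CommSemiring R]

theorem totalDegree_le_of_homogeneousComponent_eq_zero {p : MvPolynomial σ R} {d : ℕ}
    (h : ∀ m, d < m → homogeneousComponent m p = 0) : p.totalDegree ≤ d := by
  refine Finset.sup_le fun u hu => ?_
  by_contra! hlt
  have := congrArg (coeff u) (h _ hlt)
  rw [coeff_homogeneousComponent, if_pos (by rfl), coeff_zero] at this
  exact mem_support_iff.1 hu this

theorem dvd_homogeneousComponent_mul {e : MvPolynomial σ R} {c : ℕ} (he : e.IsHomogeneous c)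
    (h : MvPolynomial σ R) (m : ℕ) : e ∣ homogeneousComponent m (e * h) := by
  rw [← sum_homogeneousComponent h, mul_sum, map_sum]
  refine Finset.dvd_sum fun i _ => ?_
  rw [homogeneousComponent_of_mem (he.mul (homogeneousComponent_isHomogeneous i h))]
  split_ifs
  · exact dvd_mul_right _ _
  · exact dvd_zero _

theorem homogeneousComponent_mem_adjoin {S : Set (MvPolynomial σ R)}
    (hS : ∀ s ∈ S, ∃ d, s.IsHomogeneous d) {p : MvPolynomial σ R} (hp : p ∈ Algebra.adjoin R S)
    (m : ℕ) : homogeneousComponent m p ∈ Algebra.adjoin R S := by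
  have hmonomial : ∀ q ∈ Submonoid.closure S, ∃ d, q.IsHomogeneous d := by
    intro q hq
    induction hq using Submonoid.closure_induction with
    | mem s hs => exact hS s hs
    | one => exact ⟨0, isHomogeneous_one σ R⟩
    | mul _ _ _ _ hx hy =>
      obtain ⟨d₁, hd₁⟩ := hx
      obtain ⟨d₂, hd₂⟩ := hy
      exact ⟨d₁ + d₂, hd₁.mul hd₂⟩
  rw [← Subalgebra.mem_toSubmodule, Algebra.adjoin_eq_span] at hp ⊢
  induction hp using Submodule.span_induction with
  | mem q hq =>
    obtain ⟨d, hd⟩ := hmonomial q hq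
    rw [homogeneousComponent_of_mem hd]
    split_ifs
    · exact Submodule.subset_span hq
    · exact zero_mem _
  | zero => rw [map_zero]; exact zero_mem _
  | add _ _ _ _ hx hy => rw [map_add]; exact add_mem hx hy
  | smul a _ _ hx => rw [map_smul]; exact Submodule.smul_mem _ a hx

end Homogeneous

section Esymm

variable {R : Type*} [CommRing R]

theorem algebraicIndependent_esymm (σ : Type*) [Fintype σ] {a : ℕ} (ha : a ≤ Fintype.card σ) :
    AlgebraicIndependent R fun i : Fin a => esymm σ R (i + 1) := fun p q h =>
  esymmAlgHom_injective R ha (Subtype.ext (by simpa only [esymmAlgHom_apply] using h))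

theorem algebraicIndependent_esymm_sumElim {σ τ : Type*} [Fintype σ] [Fintype τ] {a b : ℕ}
    (ha : a ≤ Fintype.card σ) (hb : b ≤ Fintype.card τ) :
    AlgebraicIndependent R (Sum.elim (fun i : Fin a => rename Sum.inl (esymm σ R (i + 1)))
      (fun i : Fin b => rename Sum.inr (esymm τ R (i + 1))) :
      Fin a ⊕ Fin b → MvPolynomial (σ ⊕ τ) R) := by
  convert ((algebraicIndependent_esymm τ hb).sumElim_comp
    (algebraicIndependent_esymm σ ha)).map' (f := (sumAlgEquiv R σ τ).symm.toAlgHom)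
      (sumAlgEquiv R σ τ).symm.injective using 1
  ext (i | i) : 1 <;> simp only [Function.comp_apply, Sum.elim_inl, Sum.elim_inr,
    AlgEquiv.coe_toAlgHom, eq_comm (a := rename _ _), AlgEquiv.symm_apply_eq]
  · rw [← map_esymm σ R _ (algebraMap R (MvPolynomial τ R))]
    exact (DFunLike.congr_fun (sumAlgEquiv_comp_rename_inl R σ τ) _).symm
  · exact (DFunLike.congr_fun (sumAlgEquiv_comp_rename_inr R σ τ) _).symm

end Esymm

section Decomposition

variable {σ R : Type*} [CommRing R] {L : Subalgebra R (MvPolynomial σ R)}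
  {e g g' h h' : MvPolynomial σ R}

theorem eq_and_eq_of_add_mul_eq_add_mul [NoZeroDivisors R] (hL : ∀ p ∈ L, e ∣ p → p = 0)
    (he : e ≠ 0) (hg : g ∈ L) (hg' : g' ∈ L) (heq : g + e * h = g' + e * h') : g = g' ∧ h = h' := by
  have hdiff : g - g' = e * (h' - h) := by linear_combination heq
  have hgg' : g - g' = 0 := hL _ (sub_mem hg hg') ⟨_, hdiff⟩
  refine ⟨sub_eq_zero.1 hgg', (sub_eq_zero.1 ?_).symm⟩
  exact (mul_eq_zero.1 (hdiff ▸ hgg')).resolve_left he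

theorem totalDegree_le_totalDegree_add_mul (hL : ∀ p ∈ L, e ∣ p → p = 0)
    (hgraded : ∀ p ∈ L, ∀ m, homogeneousComponent m p ∈ L) {c : ℕ} (he : e.IsHomogeneous c)
    (hg : g ∈ L) : g.totalDegree ≤ (g + e * h).totalDegree := by
  refine totalDegree_le_of_homogeneousComponent_eq_zero fun m hm => hL _ (hgraded g hg m) ?_
  have hsum := homogeneousComponent_eq_zero m (g + e * h) hm
  rw [map_add, add_eq_zero_iff_eq_neg] at hsum
  exact hsum ▸ (dvd_neg.2 (dvd_homogeneousComponent_mul he h m))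

theorem totalDegree_add_le_totalDegree_add_mul [NoZeroDivisors R] (hL : ∀ p ∈ L, e ∣ p → p = 0)
    (hgraded : ∀ p ∈ L, ∀ m, homogeneousComponent m p ∈ L) {c : ℕ} (he : e.IsHomogeneous c)
    (he₀ : e ≠ 0) (hg : g ∈ L) : h = 0 ∨ h.totalDegree + c ≤ (g + e * h).totalDegree := by
  refine or_iff_not_imp_left.2 fun h₀ => ?_
  calc h.totalDegree + c = (g + e * h - g).totalDegree := by
        rw [add_sub_cancel_left, totalDegree_mul_of_isDomain he₀ h₀, he.totalDegree he₀, add_comm]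
    _ ≤ max (g + e * h).totalDegree g.totalDegree := totalDegree_sub _ _
    _ = (g + e * h).totalDegree := max_eq_left (totalDegree_le_totalDegree_add_mul hL hgraded he hg)

end Decomposition

end MvPolynomial

section Semisymmetric

variable {k : Type*} [Field k] {n : ℕ}

theorem rename_subtypeVal_esymm (S : Finset (Fin n)) (m : ℕ) :
    rename (Subtype.val : S → Fin n) (esymm S k m) = esymS k n S m := by
  conv_rhs => rw [esymS, ← attach_map_val (s := S), powersetCard_map, sum_map]
  simp only [esymm, map_sum, map_prod, rename_X, univ_eq_attach, RelEmbedding.coe_toEmbedding,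
    mapEmbedding_apply, prod_map, Function.Embedding.coe_subtype]

theorem esymS_isHomogeneous (S : Finset (Fin n)) (m : ℕ) : (esymS k n S m).IsHomogeneous m := by
  refine IsHomogeneous.sum _ _ _ fun T hT => ?_
  simpa [(mem_powersetCard.1 hT).2] using
    IsHomogeneous.prod T (fun i => (X i : MvPolynomial (Fin n) k)) (fun _ => 1)
      fun i _ => isHomogeneous_X k i

theorem esymS_card (S : Finset (Fin n)) : esymS k n S #S = ∏ i ∈ S, X i := by
  rw [esymS, powersetCard_self, sum_singleton]

theorem esymS_eq_zero_of_card_lt {S : Finset (Fin n)} {m : ℕ} (h : #S < m) :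
    esymS k n S m = 0 := by
  rw [esymS, powersetCard_eq_empty.2 h, sum_empty]

theorem aeval_update_zero_esymS (j : Fin n) (S : Finset (Fin n)) (m : ℕ) :
    aeval (Function.update X j 0) (esymS k n S m) = esymS k n (S.erase j) m := by
  have hprod : ∀ T : Finset (Fin n),
      ∏ i ∈ T, Function.update (X (R := k)) j 0 i = if j ∈ T then 0 else ∏ i ∈ T, X i := by
    intro T
    split_ifs with hj
    · rw [prod_update_of_mem hj, zero_mul]
    · exact prod_update_of_notMem hj _ _
  have hfilter : {T ∈ S.powersetCard m | j ∉ T} = (S.erase j).powersetCard m := by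
    ext T
    simp only [mem_filter, mem_powersetCard, subset_erase]
    tauto
  simp only [esymS, map_sum, map_prod, aeval_X, hprod, sum_ite, sum_const_zero, zero_add, hfilter]

variable (k) in
noncomputable def esymSFamily (A B : Finset (Fin n)) (a b : ℕ) :
    Fin a ⊕ Fin b → MvPolynomial (Fin n) k :=
  Sum.elim (fun i => esymS k n A (i + 1)) (fun i => esymS k n B (i + 1))

theorem algebraicIndependent_esymSFamily {A B : Finset (Fin n)} (hAB : Disjoint A B) {a b : ℕ}
    (ha : a ≤ #A) (hb : b ≤ #B) : AlgebraicIndependent k (esymSFamily k A B a b) := by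
  have hinj : Function.Injective (Sum.elim (Subtype.val : A → Fin n) (Subtype.val : B → Fin n)) :=
    Subtype.val_injective.sumElim Subtype.val_injective fun x y hxy =>
      disjoint_left.1 hAB x.2 (hxy ▸ y.2)
  convert (algebraicIndependent_esymm_sumElim (R := k) (σ := A) (τ := B) (by simpa using ha)
    (by simpa using hb)).map' (rename_injective _ hinj) using 1
  ext (i | i) : 1 <;>
    simp only [esymSFamily, Function.comp_apply, Sum.elim_inl, Sum.elim_inr, rename_rename,
      Sum.elim_comp_inl, Sum.elim_comp_inr, rename_subtypeVal_esymm]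

theorem homogeneousComponent_mem_adjoin_esymSFamily {A B : Finset (Fin n)} {a b : ℕ}
    {p : MvPolynomial (Fin n) k} (hp : p ∈ Algebra.adjoin k (Set.range (esymSFamily k A B a b)))
    (m : ℕ) : homogeneousComponent m p ∈ Algebra.adjoin k (Set.range (esymSFamily k A B a b)) := by
  refine homogeneousComponent_mem_adjoin ?_ hp m
  rintro _ ⟨i | i, rfl⟩
  exacts [⟨_, esymS_isHomogeneous A (i + 1)⟩, ⟨_, esymS_isHomogeneous B (i + 1)⟩]

theorem esymS_mem_adjoin_esymSFamily {A B S : Finset (Fin n)} (hS : S = A ∨ S = B) {m : ℕ}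
    (hm : 1 ≤ m) (hne : esymS k n S m ≠ ∏ i ∈ B, X i) :
    esymS k n S m ∈ Algebra.adjoin k (Set.range (esymSFamily k A B #A (#B - 1))) := by
  rcases lt_or_ge #S m with hlt | hle
  · rw [esymS_eq_zero_of_card_lt hlt]
    exact zero_mem _
  obtain ⟨m, rfl⟩ := Nat.exists_eq_add_of_le' hm
  apply Algebra.subset_adjoin
  rcases hS with rfl | rfl
  · exact ⟨Sum.inl ⟨m, by omega⟩, rfl⟩
  · have hm_ne : m + 1 ≠ #S := fun h => hne (h ▸ esymS_card S)
    exact ⟨Sum.inr ⟨m, by omega⟩, rfl⟩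

theorem eq_zero_of_prod_X_dvd_of_mem_adjoin {A B : Finset (Fin n)} (hAB : Disjoint A B)
    (hB : B.Nonempty) {p : MvPolynomial (Fin n) k}
    (hp : p ∈ Algebra.adjoin k (Set.range (esymSFamily k A B #A (#B - 1))))
    (hdvd : (∏ i ∈ B, X i) ∣ p) : p = 0 := by
  obtain ⟨j, hj⟩ := hB
  rw [Algebra.adjoin_range_eq_range_aeval, AlgHom.mem_range] at hp
  obtain ⟨P, rfl⟩ := hp
  set φ : MvPolynomial (Fin n) k →ₐ[k] MvPolynomial (Fin n) k := aeval (Function.update X j 0)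
  have hφ : φ.comp (aeval (esymSFamily k A B #A (#B - 1))) =
      aeval (esymSFamily k A (B.erase j) #A (#B - 1)) := by
    ext (i | i) : 1 <;>
      simp only [φ, AlgHom.comp_apply, aeval_X, esymSFamily, Sum.elim_inl, Sum.elim_inr,
        aeval_update_zero_esymS, erase_eq_self.2 (disjoint_right.1 hAB hj)]
  have hφ_prod : φ (∏ i ∈ B, X i) = 0 := by
    rw [map_prod]
    exact prod_eq_zero hj (by simp [φ])
  have hP : P = 0 := by
    refine algebraicIndependent_esymSFamily (hAB.mono_right (erase_subset j B)) le_rfl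
      (card_erase_of_mem hj).ge ?_
    obtain ⟨q, hq⟩ := hdvd
    rw [map_zero, ← hφ, AlgHom.comp_apply, hq, map_mul, hφ_prod, zero_mul]
  rw [hP, map_zero]

end Semisymmetric

section Parity

variable {k : Type*} [Field k] {n : ℕ}

def eProdVars (n : ℕ) : Finset (Fin n) := {i | (i : ℕ) % 2 = (n - 1) % 2}

theorem eProd_eq_prod_eProdVars : eProd k n = ∏ i ∈ eProdVars n, X i := rfl

theorem card_eProdVars (n : ℕ) : #(eProdVars n) = (n + 1) / 2 := by
  have hcount : #(eProdVars n) = Nat.count (· ≡ n - 1 [MOD 2]) n := by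
    rw [Nat.count_eq_card_filter_range, eProdVars, card_filter, card_filter]
    exact Fin.sum_univ_eq_sum_range (fun i => if i % 2 = (n - 1) % 2 then 1 else 0) n
  rw [hcount, Nat.count_modEq_card n two_pos]
  split_ifs <;> omega

theorem eProdVars_nonempty (hn : n ≠ 0) : (eProdVars n).Nonempty :=
  ⟨⟨n - 1, by omega⟩, by simp [eProdVars]⟩

theorem eProd_isHomogeneous : (eProd k n).IsHomogeneous ((n + 1) / 2) := by
  rw [← card_eProdVars, eProd_eq_prod_eProdVars, ← esymS_card]
  exact esymS_isHomogeneous _ _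

theorem eProd_ne_zero : eProd k n ≠ 0 :=
  prod_ne_zero_iff.2 fun i _ => X_ne_zero i

theorem oddVars_eq_compl_or_eq : oddVars n = (eProdVars n)ᶜ ∨ oddVars n = eProdVars n := by
  rcases Nat.mod_two_eq_zero_or_one (n - 1) with h | h <;> [right; left] <;>
    ext i <;> simp [oddVars, eProdVars, Nat.even_iff, h]

theorem evenVars_eq_compl_or_eq : evenVars n = (eProdVars n)ᶜ ∨ evenVars n = eProdVars n := by
  rcases Nat.mod_two_eq_zero_or_one (n - 1) with h | h <;> [left; right] <;>
    ext i <;> simp [evenVars, eProdVars, Nat.odd_iff, h]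

theorem lowerInvariants_le_adjoin_esymSFamily :
    lowerInvariants k n ≤ Algebra.adjoin k (Set.range
      (esymSFamily k (eProdVars n)ᶜ (eProdVars n) #(eProdVars n)ᶜ (#(eProdVars n) - 1))) := by
  refine Algebra.adjoin_le ?_
  rintro p ⟨⟨m, hm, -, rfl⟩ | ⟨m, hm, -, rfl⟩, hne⟩
  · exact esymS_mem_adjoin_esymSFamily oddVars_eq_compl_or_eq hm hne
  · exact esymS_mem_adjoin_esymSFamily evenVars_eq_compl_or_eq hm hne

end Parity

theorem decomposition_unique (hn : 2 ≤ n)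
    (f g₁ g₂ h₁ h₂ : MvPolynomial (Fin n) k)
    (hg₁ : g₁ ∈ lowerInvariants k n) (hg₂ : g₂ ∈ lowerInvariants k n)
    (hdec₁ : f = g₁ + eProd k n * h₁) (hdec₂ : f = g₂ + eProd k n * h₂) :
    g₁ = g₂ ∧ h₁ = h₂ ∧ g₁.totalDegree ≤ f.totalDegree ∧
      (h₁ = 0 ∨ h₁.totalDegree + (n + 1) / 2 ≤ f.totalDegree) := by
  set B := eProdVars n
  set L := Algebra.adjoin k (Set.range (esymSFamily k Bᶜ B #Bᶜ (#B - 1)))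
  have hL : ∀ p ∈ L, eProd k n ∣ p → p = 0 := fun p hp =>
    eq_zero_of_prod_X_dvd_of_mem_adjoin disjoint_compl_left (eProdVars_nonempty (by omega)) hp
  have hgraded : ∀ p ∈ L, ∀ m, homogeneousComponent m p ∈ L := fun _ hp m =>
    homogeneousComponent_mem_adjoin_esymSFamily hp m
  have hg₁L : g₁ ∈ L := lowerInvariants_le_adjoin_esymSFamily hg₁
  obtain ⟨rfl, rfl⟩ := eq_and_eq_of_add_mul_eq_add_mul hL eProd_ne_zero hg₁L
    (lowerInvariants_le_adjoin_esymSFamily hg₂) (hdec₁.symm.trans hdec₂)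
  subst hdec₁
  exact ⟨rfl, rfl, totalDegree_le_totalDegree_add_mul hL hgraded eProd_isHomogeneous hg₁L,
    totalDegree_add_le_totalDegree_add_mul hL hgraded eProd_isHomogeneous eProd_ne_zero hg₁L⟩
end

section
/- Let n = 3 and Λ the weakly decreasing triples of nonnegative integers. For μ ∈ Λ define ē_μ := ē_1^{μ_1−μ_2} ē_2^{μ_2−μ_3} ē_3^{μ_3}, where ē_1 = z_1 − z_2 + z_3, ē_2 = z_2, ē_3 = z_1 z_3. Then the leading monomial of ē_μ in the lexicographic order on (z_1, z_2, z_3) is z^{[μ]} = z_1^{μ_1−μ_2+μ_3} z_2^{μ_2−μ_3} z_3^{μ_3}, and consequently the ē_μ for μ ∈ Λ are linearly independent over ℚ. -/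
open MvPolynomial

/-- `ē_1 = z_1 − z_2 + z_3`. -/
noncomputable def eb1 : MvPolynomial (Fin 3) ℚ := X 0 - X 1 + X 2
/-- `ē_2 = z_2`. -/
noncomputable def eb2 : MvPolynomial (Fin 3) ℚ := X 1
/-- `ē_3 = z_1 z_3`. -/
noncomputable def eb3 : MvPolynomial (Fin 3) ℚ := X 0 * X 2

/-- `ē_μ = ē_1^{μ_1−μ_2} ē_2^{μ_2−μ_3} ē_3^{μ_3}`. -/
noncomputable def ebMu (mu : Fin 3 → ℕ) : MvPolynomial (Fin 3) ℚ :=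
  eb1 ^ (mu 0 - mu 1) * eb2 ^ (mu 1 - mu 2) * eb3 ^ (mu 2)

/-- The exponent vector `[μ] = (μ_1−μ_2+μ_3, μ_2−μ_3, μ_3)` as a `Finsupp`. -/
noncomputable def brkMu (mu : Fin 3 → ℕ) : Fin 3 →₀ ℕ :=
  Finsupp.equivFunOnFinite.symm ![mu 0 - mu 1 + mu 2, mu 1 - mu 2, mu 2]

/-- Strict lexicographic order on exponent vectors, `z_1` most significant. -/
def LexLt (a b : Fin 3 →₀ ℕ) : Prop :=
  a 0 < b 0 ∨ (a 0 = b 0 ∧ (a 1 < b 1 ∨ (a 1 = b 1 ∧ a 2 < b 2)))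

/-!
Everything is read off from leading terms for the lexicographic monomial order. The three
generators are monic, with leading monomials `z_1`, `z_2` and `z_1 z_3`; leading monomials
multiply, so `ē_μ` is monic with leading monomial
`z_1^{μ_1−μ_2} · z_2^{μ_2−μ_3} · (z_1 z_3)^{μ_3} = z^{[μ]}`. On partitions `μ ↦ [μ]` is
injective, and polynomials with pairwise distinct leading monomials are linearly independent:
in a vanishing combination, the coefficient of the largest leading monomial involves only
one term.
-/

open MonomialOrder

namespace MonomialOrder

variable {σ R ι : Type*} [CommRing R] (m : MonomialOrder σ)

theorem eq_degree_or_lt_of_coeff_ne_zero {f : MvPolynomial σ R} {d : σ →₀ ℕ}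
    (hd : coeff d f ≠ 0) : d = m.degree f ∨ d ≺[m] m.degree f :=
  (m.le_degree (mem_support_iff.mpr hd)).eq_or_lt.imp_left (m.toSyn.injective ·)

theorem linearIndependent_of_injective_degree [NoZeroDivisors R]
    {f : ι → MvPolynomial σ R} (hf : ∀ i, f i ≠ 0)
    (hinj : Function.Injective fun i => m.degree (f i)) : LinearIndependent R f := by
  rw [linearIndependent_iff]
  intro l hl
  by_contra hl0
  obtain ⟨i, hi, hmax⟩ := l.support.exists_max_image (fun j => m.toSyn (m.degree (f j)))
    (Finsupp.support_nonempty_iff.mpr hl0)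
  have hlt : ∀ j ∈ l.support, j ≠ i → m.degree (f j) ≺[m] m.degree (f i) :=
    fun j hj hji => lt_of_le_of_ne (hmax j hj) fun h => hji (hinj (m.toSyn.injective h))
  have hcoeff := congrArg (coeff (m.degree (f i))) hl
  rw [Finsupp.linearCombination_apply, Finsupp.sum, coeff_sum,
    Finset.sum_eq_single_of_mem i hi fun j hj hji => by
      rw [coeff_smul, m.coeff_eq_zero_of_lt (hlt j hj hji), smul_zero],
    coeff_smul, coeff_zero, smul_eq_mul, mul_eq_zero] at hcoeff
  rcases hcoeff with h | h
  · exact Finsupp.mem_support_iff.mp hi h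
  · exact m.leadingCoeff_ne_zero_iff.mpr (hf i) h

end MonomialOrder

theorem lexLt_iff_lex_lt {a b : Fin 3 →₀ ℕ} : LexLt a b ↔ a ≺[lex] b := by
  rw [lex_lt_iff, Finsupp.Lex.lt_iff, LexLt]
  simp [Fin.exists_fin_succ, Fin.forall_fin_succ, and_or_left, and_assoc]

theorem lex_degree_eb1 : lex.degree eb1 = Finsupp.single 0 1 := by
  have hsub : lex.degree (X 0 - X 1 : MvPolynomial (Fin 3) ℚ) = Finsupp.single 0 1 := by
    rw [degree_sub_of_lt] <;> simp [degree_X, lex_lt_iff, Finsupp.Lex.single_lt_iff]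
  rw [eb1, degree_add_of_lt] <;> simp [hsub, degree_X, lex_lt_iff, Finsupp.Lex.single_lt_iff]

theorem lex_monic_eb1 : lex.Monic eb1 := by
  rw [Monic, leadingCoeff, lex_degree_eb1]
  simp [eb1, coeff_X, Finsupp.single_eq_single_iff]

theorem lex_monic_eb2 : lex.Monic eb2 := monic_X

theorem lex_degree_eb2 : lex.degree eb2 = Finsupp.single 1 1 := degree_X

theorem lex_monic_eb3 : lex.Monic eb3 := monic_X.mul monic_X

theorem lex_degree_eb3 : lex.degree eb3 = Finsupp.single 0 1 + Finsupp.single 2 1 := by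
  rw [eb3, degree_mul (X_ne_zero _) (X_ne_zero _), degree_X, degree_X]

theorem lex_monic_ebMu (mu : Fin 3 → ℕ) : lex.Monic (ebMu mu) :=
  (lex_monic_eb1.pow.mul lex_monic_eb2.pow).mul lex_monic_eb3.pow

theorem lex_degree_ebMu (mu : Fin 3 → ℕ) : lex.degree (ebMu mu) = brkMu mu := by
  rw [ebMu, degree_mul (lex_monic_eb1.pow.mul lex_monic_eb2.pow).ne_zero lex_monic_eb3.pow.ne_zero,
    degree_mul lex_monic_eb1.pow.ne_zero lex_monic_eb2.pow.ne_zero, degree_pow, degree_pow,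
    degree_pow, lex_degree_eb1, lex_degree_eb2, lex_degree_eb3]
  ext i
  fin_cases i <;> simp [brkMu]

theorem brkMu_injOn :
    Set.InjOn brkMu {mu : Fin 3 → ℕ | mu 1 ≤ mu 0 ∧ mu 2 ≤ mu 1} := by
  rintro mu ⟨hmu₁, hmu₂⟩ nu ⟨hnu₁, hnu₂⟩ h
  have h0 := DFunLike.congr_fun h 0
  have h1 := DFunLike.congr_fun h 1
  have h2 := DFunLike.congr_fun h 2
  simp only [brkMu, Finsupp.equivFunOnFinite_symm_apply_apply, Matrix.cons_val] at h0 h1 h2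
  funext i
  match i with
  | 0 | 1 | 2 => omega

/-- For `n = 3`: the leading monomial of `ē_μ` in lexicographic order is `z^{[μ]}`
(with coefficient 1), and consequently the `ē_μ`, for `μ` ranging over partitions,
are linearly independent over `ℚ`. -/
theorem ebMu_leading_monomial_and_linearIndependent :
    (∀ mu : Fin 3 → ℕ, mu 1 ≤ mu 0 → mu 2 ≤ mu 1 →
      coeff (brkMu mu) (ebMu mu) = 1 ∧
        ∀ ν : Fin 3 →₀ ℕ, coeff ν (ebMu mu) ≠ 0 → ν = brkMu mu ∨ LexLt ν (brkMu mu)) ∧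
    LinearIndependent ℚ
      (fun mu : {a : Fin 3 → ℕ // a 1 ≤ a 0 ∧ a 2 ≤ a 1} => ebMu mu.1) := by
  refine ⟨fun mu _ _ => ⟨?_, fun ν hν => ?_⟩, ?_⟩
  · rw [← lex_degree_ebMu]
    exact (lex_monic_ebMu mu).coeff_degree
  · rw [← lex_degree_ebMu, lexLt_iff_lex_lt]
    exact lex.eq_degree_or_lt_of_coeff_ne_zero hν
  · refine lex.linearIndependent_of_injective_degree (fun mu => (lex_monic_ebMu _).ne_zero) ?_
    intro mu nu h
    simp only [lex_degree_ebMu] at h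
    exact Subtype.ext (brkMu_injOn mu.2 nu.2 h)
end

section
/- Let n ≥ 1, k a field of characteristic zero, r ∈ k not a negative rational, ρ := ((n−1)r, …, r, 0), and for each partition λ of length n let R_λ be the unique W-invariant polynomial of degree |λ|_odd with leading coefficient making R_λ(z) = z^{[λ]} + (dominance-lower terms), vanishing at ρ+μ for all partitions μ ≠ λ with |μ|_odd ≤ |λ|_odd. Then for any partition λ with λ_n ≥ 1, R_λ(z; r) = (∏_{i : n−i even} z_i) · R_{λ−δ}(z−δ; r), where δ = (1,…,1). -/
set_option linter.unusedSectionVars false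
set_option maxHeartbeats 1000000


open Finset MvPolynomial

/-- Partitions of length `n`. -/
def IsPartitionN {n : ℕ} (lam : Fin n → ℕ) : Prop :=
  ∀ i j : Fin n, i ≤ j → lam j ≤ lam i

/-- `|λ|_odd` (1-based odd positions = 0-based even positions). -/
def oddDeg {n : ℕ} (lam : Fin n → ℕ) : ℕ :=
  ∑ i ∈ Finset.univ.filter (fun i : Fin n => Even (i : ℕ)), lam i

/-- The exponent vector `[λ]`, with `[λ]_m = λ_m − λ_{m+1} + … + (−1)^{n−m} λ_n ≥ 0`. -/
noncomputable def brkN {n : ℕ} (lam : Fin n → ℕ) : Fin n →₀ ℕ :=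
  Finsupp.equivFunOnFinite.symm fun m =>
    (∑ j ∈ Finset.univ.filter (fun j : Fin n => m ≤ j),
        (-1 : ℤ) ^ ((j : ℕ) - (m : ℕ)) * (lam j : ℤ)).toNat

section Aux
variable {k : Type*} [Field k] [CharZero k] {n : ℕ}

lemma aux_aeval_self_eq_eval (x : Fin n → k) (p : MvPolynomial (Fin n) k) :
    aeval x p = eval x p := by rw [← coe_aeval_eq_eval]; rfl

/-- degree of `aeval φ p` when each `φ i` has degree ≤ 1. -/
lemma aux_totalDegree_aeval_le {σ τ : Type*} [Fintype σ] [DecidableEq σ]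
    (φ : σ → MvPolynomial τ k) (hφ : ∀ i, (φ i).totalDegree ≤ 1)
    (p : MvPolynomial σ k) : (aeval φ p).totalDegree ≤ p.totalDegree := by
  conv_lhs => rw [p.as_sum, map_sum]
  refine (totalDegree_finset_sum _ _).trans (Finset.sup_le fun a ha => ?_)
  have h1 : (aeval φ (monomial a (coeff a p))).totalDegree ≤ a.sum fun _ e => e := by
    rw [aeval_monomial]
    refine (totalDegree_mul _ _).trans ?_
    have : (algebraMap k (MvPolynomial τ k) (coeff a p)).totalDegree = 0 := totalDegree_C _
    rw [this, zero_add]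
    refine (totalDegree_finset_prod _ _).trans ?_
    rw [Finsupp.sum]
    refine Finset.sum_le_sum fun i _ => ?_
    exact (totalDegree_pow _ _).trans (by
      calc a i * (φ i).totalDegree ≤ a i * 1 := Nat.mul_le_mul_left _ (hφ i)
        _ = a i := Nat.mul_one _)
  exact h1.trans (le_totalDegree ha)


/-- the shift substitution `z ↦ z + c`. -/
noncomputable def shE (c : k) : MvPolynomial (Fin n) k →ₐ[k] MvPolynomial (Fin n) k :=
  aeval (fun i => X i + C c)

lemma shE_comp (c d : k) (p : MvPolynomial (Fin n) k) :
    shE c (shE d p) = shE (c + d) p := by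
  have : (shE c).comp (shE (n := n) d) = shE (c + d) := by
    apply algHom_ext
    intro i
    simp [shE, map_add, aeval_X, add_assoc]
  exact DFunLike.congr_fun this p

lemma shE_zero (p : MvPolynomial (Fin n) k) : shE 0 p = p := by
  have : shE (n := n) (0 : k) = AlgHom.id k _ := by
    apply algHom_ext
    intro i
    simp [shE]
  rw [this]; rfl

lemma shE_neg_cancel (c : k) (p : MvPolynomial (Fin n) k) : shE c (shE (-c) p) = p := by
  rw [shE_comp, add_neg_cancel, shE_zero]

lemma eval_shE (x : Fin n → k) (c : k) (p : MvPolynomial (Fin n) k) :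
    eval x (shE c p) = eval (fun i => x i + c) p := by
  rw [← aux_aeval_self_eq_eval, ← aux_aeval_self_eq_eval]
  have : (aeval x : MvPolynomial (Fin n) k →ₐ[k] k).comp (shE c)
      = aeval (fun i => x i + c) := by
    rw [shE, comp_aeval]
    congr 1
    funext i
    simp
  exact DFunLike.congr_fun this p

lemma rename_shE (π : Equiv.Perm (Fin n)) (c : k) (p : MvPolynomial (Fin n) k) :
    rename π (shE c p) = shE c (rename π p) := by
  have : (rename π : MvPolynomial (Fin n) k →ₐ[k] _).comp (shE c)
      = (shE c).comp (rename π) := by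
    apply algHom_ext
    intro i
    simp [shE, map_add, aeval_X]
  exact DFunLike.congr_fun this p

lemma totalDegree_shE_le (c : k) (p : MvPolynomial (Fin n) k) :
    (shE c p).totalDegree ≤ p.totalDegree := by
  refine aux_totalDegree_aeval_le _ (fun i => ?_) p
  refine (totalDegree_add _ _).trans ?_
  simp [totalDegree_X, totalDegree_C]

lemma aux_finsupp_sum_eq_zero {a : Fin n →₀ ℕ} (h : (a.sum fun _ e => e) = 0) : a = 0 := by
  ext i
  by_contra hi
  have hmem : i ∈ a.support := Finsupp.mem_support_iff.mpr (by simpa using hi)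
  have := (Finset.sum_eq_zero_iff.mp h) i hmem
  exact hi (by simpa using this)

lemma aux_totalDegree_monomial_le (a : Fin n →₀ ℕ) (c : k) :
    (monomial a c).totalDegree ≤ a.sum fun _ e => e := by
  rcases eq_or_ne c 0 with rfl | hc
  · simp
  · exact le_of_eq (totalDegree_monomial a hc)

lemma coeff_shE_monomial (c c' : k) :
    ∀ (N : ℕ) (a b : Fin n →₀ ℕ), (a.sum fun _ e => e) ≤ N →
      (a.sum fun _ e => e) ≤ (b.sum fun _ e => e) →
      coeff b (shE c (monomial a c')) = coeff b (monomial a c') := by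
  intro N
  induction N with
  | zero =>
    intro a b ha _
    have : a = 0 := aux_finsupp_sum_eq_zero (Nat.le_zero.mp ha)
    subst this
    rw [monomial_zero', shE]
    simp
  | succ N IH =>
    intro a b ha hab
    rcases eq_or_ne a 0 with rfl | hane
    · rw [monomial_zero', shE]; simp
    have hsupp : a.support.Nonempty := Finsupp.support_nonempty_iff.mpr hane
    obtain ⟨j, hj⟩ := hsupp
    have haj : a j ≠ 0 := Finsupp.mem_support_iff.mp hj
    set a' : Fin n →₀ ℕ := a - Finsupp.single j 1 with ha'def
    have ha' : a = Finsupp.single j 1 + a' := by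
      ext i
      simp only [ha'def, Finsupp.add_apply, Finsupp.tsub_apply, Finsupp.single_apply]
      rcases eq_or_ne j i with rfl | hij
      · simp; omega
      · simp [hij]
    have hsum : (a.sum fun _ e => e) = 1 + (a'.sum fun _ e => e) := by
      rw [ha', Finsupp.sum_add_index' (fun _ => rfl) (fun _ _ _ => rfl),
        Finsupp.sum_single_index rfl]
    have hmono : monomial a c' = X j * monomial a' c' := by
      rw [ha', monomial_single_add, pow_one]
    set Q := shE c (monomial a' c') with hQ
    have hexp : shE c (monomial a c') = X j * Q + C c * Q := by
      rw [hmono, map_mul]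
      have : shE c (X j) = X j + C c := by simp [shE]
      rw [this, add_mul]
    have hdegQ : Q.totalDegree ≤ a'.sum fun _ e => e :=
      (totalDegree_shE_le _ _).trans (aux_totalDegree_monomial_le _ _)
    have hbQ : coeff b Q = 0 := by
      refine coeff_eq_zero_of_totalDegree_lt (lt_of_le_of_lt hdegQ ?_)
      have hss : (b.sum fun _ e => e) = ∑ i ∈ b.support, b i := rfl
      omega
    rcases eq_or_ne (b j) 0 with hbj | hbj
    · have h1 : coeff b (X j * Q) = 0 := by
        have hns : ¬ Finsupp.single j 1 ≤ b := by
          rw [Finsupp.single_le_iff]; omega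
        have h2 := coeff_modMonomial_of_not_le (X j * Q) hns
        rw [X_mul_modMonomial] at h2
        simpa using h2.symm
      rw [hexp, coeff_add, coeff_C_mul, hbQ, h1, coeff_monomial]
      have : a ≠ b := fun h => haj (h ▸ hbj)
      simp [this]
    · set b' : Fin n →₀ ℕ := b - Finsupp.single j 1 with hb'def
      have hb' : b = Finsupp.single j 1 + b' := by
        ext i
        simp only [hb'def, Finsupp.add_apply, Finsupp.tsub_apply, Finsupp.single_apply]
        rcases eq_or_ne j i with rfl | hij
        · simp; omega
        · simp [hij]
      have hbsum : (b.sum fun _ e => e) = 1 + (b'.sum fun _ e => e) := by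
        rw [hb', Finsupp.sum_add_index' (fun _ => rfl) (fun _ _ _ => rfl),
          Finsupp.sum_single_index rfl]
      have hXQ : coeff b (X j * Q) = coeff b' Q := by
        rw [hb', coeff_X_mul]
      have hIH := IH a' b' (by omega) (by omega)
      rw [hexp, coeff_add, coeff_C_mul, hbQ, hXQ, hIH, mul_zero, add_zero,
        coeff_monomial, coeff_monomial]
      have hiff : a' = b' ↔ a = b := by
        constructor
        · intro h; rw [ha', hb', h]
        · intro h
          have : Finsupp.single j 1 + a' = Finsupp.single j 1 + b' := by rw [← ha', ← hb', h]
          exact add_left_cancel this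
      by_cases hcase : a' = b'
      · rw [if_pos hcase, if_pos (hiff.mp hcase)]
      · rw [if_neg hcase, if_neg (fun h => hcase (hiff.mpr h))]

lemma coeff_shE_top (c : k) (p : MvPolynomial (Fin n) k) (b : Fin n →₀ ℕ)
    (hb : p.totalDegree ≤ b.sum fun _ e => e) :
    coeff b (shE c p) = coeff b p := by
  conv_lhs => rw [p.as_sum, map_sum]
  conv_rhs => rw [p.as_sum]
  rw [coeff_sum, coeff_sum]
  refine Finset.sum_congr rfl fun a ha => ?_
  exact coeff_shE_monomial c _ (a.sum fun _ e => e) a b le_rfl ((le_totalDegree ha).trans hb)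

lemma killAt_coeff (j : Fin n) (p : MvPolynomial (Fin n) k) (d : Fin n →₀ ℕ) (hd : d j = 0) :
    coeff d (aeval (fun i => if i = j then 0 else X i) p) = coeff d p := by
  induction p using MvPolynomial.induction_on' with
  | monomial a c =>
    rw [aeval_monomial]
    rcases eq_or_ne (a j) 0 with haj | haj
    · have hprod : (a.prod fun i e => (if i = j then 0 else X i) ^ e)
          = a.prod fun i e => (X i : MvPolynomial (Fin n) k) ^ e := by
        apply Finsupp.prod_congr
        intro i hi
        have hij : i ≠ j := fun h => (Finsupp.mem_support_iff.mp hi) (h ▸ haj)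
        rw [if_neg hij]
      rw [hprod, algebraMap_eq, ← monomial_eq]
    · have hz : (a.prod fun i e => (if i = j then 0 else X i) ^ e)
          = (0 : MvPolynomial (Fin n) k) := by
        rw [Finsupp.prod]
        apply Finset.prod_eq_zero (Finsupp.mem_support_iff.mpr haj)
        rw [if_pos rfl]
        exact zero_pow haj
      rw [hz, mul_zero, coeff_zero, coeff_monomial]
      have : a ≠ d := fun h => haj (h ▸ hd)
      rw [if_neg this]
  | add p q hp hq => rw [map_add, coeff_add, coeff_add, hp, hq]

lemma monomial_dvd_of_coeff {u : Fin n →₀ ℕ} {p : MvPolynomial (Fin n) k}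
    (h : ∀ d, coeff d p ≠ 0 → u ≤ d) :
    ∃ q, p = monomial u 1 * q ∧ (∀ d, coeff d q = coeff (u + d) p) := by
  refine ⟨p.divMonomial u, ?_, fun d => coeff_divMonomial u p d⟩
  have hmod : p.modMonomial u = 0 := by
    apply MvPolynomial.ext
    intro d
    by_cases hud : u ≤ d
    · rw [coeff_modMonomial_of_le p hud, coeff_zero]
    · rw [coeff_modMonomial_of_not_le p hud, coeff_zero]
      by_contra hne
      exact hud (h d hne)
  have h2 := divMonomial_add_modMonomial p u
  rw [hmod, add_zero] at h2
  exact h2.symm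

noncomputable def uvec (n c : ℕ) : Fin n →₀ ℕ :=
  ∑ i ∈ Finset.univ.filter (fun i : Fin n => (i : ℕ) % 2 = c), Finsupp.single i 1

lemma uvec_apply (c : ℕ) (j : Fin n) : uvec n c j = if (j : ℕ) % 2 = c then 1 else 0 := by
  classical
  rw [uvec, Finset.sum_apply']
  simp [Finsupp.single_apply, Finset.sum_ite_eq', Finset.mem_filter]

lemma uvec_sum (c : ℕ) :
    ((uvec n c).sum fun _ e => e)
      = (Finset.univ.filter (fun i : Fin n => (i : ℕ) % 2 = c)).card := by
  classical
  rw [Finsupp.sum_fintype _ _ (fun _ => rfl)]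
  rw [Finset.card_filter]
  simp [uvec_apply]

lemma prod_X_finset (s : Finset (Fin n)) :
    (∏ i ∈ s, (X i : MvPolynomial (Fin n) k))
      = monomial (∑ i ∈ s, Finsupp.single i 1) 1 := by
  classical
  induction s using Finset.induction_on with
  | empty => simp [monomial_zero']
  | @insert a s ha IH =>
    rw [Finset.prod_insert ha, Finset.sum_insert ha, IH, monomial_single_add, pow_one]

lemma prod_X_filter (c : ℕ) :
    (∏ i ∈ Finset.univ.filter (fun i : Fin n => (i : ℕ) % 2 = c),
      (X i : MvPolynomial (Fin n) k)) = monomial (uvec n c) 1 := by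
  rw [uvec, prod_X_finset]

lemma parityPerm_symm {π : Equiv.Perm (Fin n)} (hπ : ParityPerm π) (j : Fin n) :
    ((π.symm j : Fin n) : ℕ) % 2 = (j : ℕ) % 2 := by
  have := hπ (π.symm j)
  rw [Equiv.apply_symm_apply] at this
  exact this.symm

lemma mapDomain_uvec {π : Equiv.Perm (Fin n)} (hπ : ParityPerm π) (c : ℕ) :
    Finsupp.mapDomain π (uvec n c) = uvec n c := by
  ext j
  rw [Finsupp.mapDomain_equiv_apply, uvec_apply, uvec_apply, parityPerm_symm hπ]

lemma rename_monomial_uvec {π : Equiv.Perm (Fin n)} (hπ : ParityPerm π) (c : ℕ) :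
    rename π (monomial (uvec n c) 1 : MvPolynomial (Fin n) k) = monomial (uvec n c) 1 := by
  rw [rename_monomial, mapDomain_uvec hπ]

lemma card_parity (n : ℕ) :
    (Finset.univ.filter fun i : Fin n => (i : ℕ) % 2 = (n - 1) % 2).card
      = (Finset.univ.filter fun i : Fin n => Even (i : ℕ)).card := by
  refine Finset.card_bij (fun i _ => (⟨n - 1 - (i : ℕ), by have := i.isLt; omega⟩ : Fin n))
    ?_ ?_ ?_
  · intro a ha
    simp only [Finset.mem_filter, Finset.mem_univ, true_and] at ha ⊢
    have := a.isLt
    rw [Nat.even_iff]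
    omega
  · intro a ha b hb h
    have h2 := congrArg Fin.val h
    simp only at h2
    have := a.isLt
    have := b.isLt
    simp only [Finset.mem_filter, Finset.mem_univ, true_and] at ha hb
    exact Fin.ext (by omega)
  · intro j hj
    simp only [Finset.mem_filter, Finset.mem_univ, true_and, Nat.even_iff] at hj
    have hjlt := j.isLt
    refine ⟨⟨n - 1 - (j : ℕ), by omega⟩, ?_, ?_⟩
    · simp only [Finset.mem_filter, Finset.mem_univ, true_and]
      omega
    · exact Fin.ext (by simp; omega)

lemma oddDeg_succ (ν : Fin n → ℕ) :
    oddDeg (fun i => ν i + 1)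
      = oddDeg ν + (Finset.univ.filter fun i : Fin n => Even (i : ℕ)).card := by
  rw [oddDeg, oddDeg, Finset.sum_add_distrib, Finset.sum_const, smul_eq_mul, mul_one]

lemma oddDeg_pred (lam : Fin n → ℕ) (hpos : ∀ i, 1 ≤ lam i) :
    oddDeg lam = oddDeg (fun i => lam i - 1)
      + (Finset.univ.filter fun i : Fin n => Even (i : ℕ)).card := by
  have h2 : (fun i => lam i - 1 + 1) = lam := funext fun i => by have := hpos i; omega
  rw [← oddDeg_succ (fun i => lam i - 1), h2]

/-- the alternating tail sum, as an integer. -/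
def Tz (lam : Fin n → ℕ) (m : ℕ) : ℤ :=
  ∑ j ∈ Finset.univ.filter (fun j : Fin n => m ≤ (j : ℕ)),
    (-1 : ℤ) ^ ((j : ℕ) - m) * (lam j : ℤ)

lemma Tz_of_ge (lam : Fin n → ℕ) {m : ℕ} (hm : n ≤ m) : Tz lam m = 0 :=
  Finset.sum_eq_zero fun j hj => by
    have := (Finset.mem_filter.mp hj).2
    have := j.isLt
    omega

lemma Tz_rec (lam : Fin n → ℕ) {m : ℕ} (hm : m < n) :
    Tz lam m = (lam ⟨m, hm⟩ : ℤ) - Tz lam (m + 1) := by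
  have hins : Finset.univ.filter (fun j : Fin n => m ≤ (j : ℕ))
      = insert (⟨m, hm⟩ : Fin n) (Finset.univ.filter (fun j : Fin n => m + 1 ≤ (j : ℕ))) := by
    ext j
    simp only [Finset.mem_filter, Finset.mem_univ, true_and, Finset.mem_insert, Fin.ext_iff]
    omega
  rw [Tz, hins, Finset.sum_insert (by simp)]
  have h2 : ∑ j ∈ Finset.univ.filter (fun j : Fin n => m + 1 ≤ (j : ℕ)),
      (-1 : ℤ) ^ ((j : ℕ) - m) * (lam j : ℤ) = - Tz lam (m + 1) := by
    rw [Tz, ← Finset.sum_neg_distrib]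
    refine Finset.sum_congr rfl fun j hj => ?_
    have hm1 : m + 1 ≤ (j : ℕ) := (Finset.mem_filter.mp hj).2
    have h3 : (j : ℕ) - m = ((j : ℕ) - (m + 1)) + 1 := by omega
    rw [h3, pow_succ]
    ring
  rw [h2]
  simp only [Nat.sub_self, pow_zero, one_mul]
  ring

lemma Tz_nonneg_le {lam : Fin n → ℕ} (hlam : IsPartitionN lam) :
    ∀ K m, n - m ≤ K → 0 ≤ Tz lam m ∧ ∀ hm : m < n, Tz lam m ≤ (lam ⟨m, hm⟩ : ℤ) := by
  intro K
  induction K with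
  | zero =>
    intro m hm
    rw [Tz_of_ge lam (by omega)]
    exact ⟨le_refl 0, fun h => absurd h (by omega)⟩
  | succ K IH =>
    intro m hm
    by_cases hlt : m < n
    · have IH1 := IH (m + 1) (by omega)
      have hrec := Tz_rec lam hlt
      have hub : Tz lam (m + 1) ≤ (lam ⟨m, hlt⟩ : ℤ) := by
        by_cases h2 : m + 1 < n
        · have h4 := IH1.2 h2
          have hmono : lam ⟨m + 1, h2⟩ ≤ lam ⟨m, hlt⟩ :=
            hlam ⟨m, hlt⟩ ⟨m + 1, h2⟩ (Fin.mk_le_mk.mpr (Nat.le_succ m))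
          have : (lam ⟨m + 1, h2⟩ : ℤ) ≤ (lam ⟨m, hlt⟩ : ℤ) := by exact_mod_cast hmono
          omega
        · rw [Tz_of_ge lam (by omega)]
          positivity
      refine ⟨by rw [hrec]; omega, fun hm' => ?_⟩
      have heq : lam ⟨m, hm'⟩ = lam ⟨m, hlt⟩ := rfl
      rw [heq, hrec]
      have := IH1.1
      omega
    · rw [Tz_of_ge lam (by omega)]
      exact ⟨le_refl 0, fun h => absurd h hlt⟩

lemma brkN_eq_Tz {lam : Fin n → ℕ} (hlam : IsPartitionN lam) (m : Fin n) :
    (brkN lam m : ℤ) = Tz lam (m : ℕ) := by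
  have hfil : Finset.univ.filter (fun j : Fin n => m ≤ j)
      = Finset.univ.filter (fun j : Fin n => (m : ℕ) ≤ (j : ℕ)) := by
    ext j
    simp only [Finset.mem_filter, Finset.mem_univ, true_and, Fin.le_def]
  have h1 : brkN lam m = (Tz lam (m : ℕ)).toNat := by
    rw [brkN, Finsupp.coe_equivFunOnFinite_symm, hfil, Tz]
  rw [h1, Int.toNat_of_nonneg ((Tz_nonneg_le hlam (n - (m : ℕ)) (m : ℕ) le_rfl).1)]

lemma Tz_sub_one (lam lam' : Fin n → ℕ) (hl : ∀ i, lam i = lam' i + 1) (m : ℕ) :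
    Tz lam m - Tz lam' m = Tz (n := n) (fun _ => 1) m := by
  rw [Tz, Tz, Tz, ← Finset.sum_sub_distrib]
  refine Finset.sum_congr rfl fun j hj => ?_
  rw [hl j]
  push_cast
  ring

lemma Tz_one (K m : ℕ) (hK : n - m ≤ K) :
    Tz (fun _ => (1 : ℕ) : Fin n → ℕ) m = (((n - m) % 2 : ℕ) : ℤ) := by
  induction K generalizing m with
  | zero =>
    rw [Tz_of_ge _ (by omega)]
    have h0 : n - m = 0 := by omega
    rw [h0]
    simp
  | succ K IH =>
    by_cases hlt : m < n
    · rw [Tz_rec _ hlt, IH (m + 1) (by omega)]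
      have h1 : ((fun _ => (1 : ℕ) : Fin n → ℕ) ⟨m, hlt⟩ : ℤ) = 1 := by norm_num
      rw [h1]
      omega
    · rw [Tz_of_ge _ (by omega)]
      have h0 : n - m = 0 := by omega
      rw [h0]
      simp

lemma sign_sum_range : ∀ J : ℕ, ∑ mv ∈ Finset.range (J + 1), ((-1 : ℤ)) ^ (J - mv)
    = if J % 2 = 0 then 1 else 0 := by
  intro J
  induction J with
  | zero => simp
  | succ J IH =>
    rw [Finset.sum_range_succ]
    have h1 : ∑ mv ∈ Finset.range (J + 1), ((-1 : ℤ)) ^ (J + 1 - mv)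
        = - ∑ mv ∈ Finset.range (J + 1), ((-1 : ℤ)) ^ (J - mv) := by
      rw [← Finset.sum_neg_distrib]
      refine Finset.sum_congr rfl fun mv hmv => ?_
      have : mv < J + 1 := Finset.mem_range.mp hmv
      have h3 : J + 1 - mv = (J - mv) + 1 := by omega
      rw [h3, pow_succ]
      ring
    rw [h1, IH, Nat.sub_self, pow_zero]
    by_cases hJ : J % 2 = 0
    · rw [if_pos hJ, if_neg (by omega)]
      ring
    · rw [if_neg hJ, if_pos (by omega)]
      ring

lemma sign_sum_fin (j : Fin n) :
    ∑ m : Fin n, (if (m : ℕ) ≤ (j : ℕ) then ((-1 : ℤ)) ^ ((j : ℕ) - (m : ℕ)) else 0)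
      = if Even (j : ℕ) then 1 else 0 := by
  rw [Fin.sum_univ_eq_sum_range (fun mv => if mv ≤ (j : ℕ) then ((-1 : ℤ)) ^ ((j : ℕ) - mv) else 0) n]
  have hsub : Finset.range ((j : ℕ) + 1) ⊆ Finset.range n := by
    intro x hx
    simp only [Finset.mem_range] at hx ⊢
    have := j.isLt
    omega
  rw [← Finset.sum_subset hsub (fun x _ hx => by
    rw [if_neg]
    simp only [Finset.mem_range] at hx
    omega)]
  rw [Finset.sum_congr rfl (fun mv hmv => if_pos (by
    simp only [Finset.mem_range] at hmv
    omega))]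
  rw [sign_sum_range]
  by_cases h : (j : ℕ) % 2 = 0
  · rw [if_pos h, if_pos (Nat.even_iff.mpr h)]
  · rw [if_neg h, if_neg (fun hc => h (Nat.even_iff.mp hc))]

lemma brkN_decomp (lam : Fin n → ℕ) (hlam : IsPartitionN lam) (hpos : ∀ i, 1 ≤ lam i) :
    brkN lam = uvec n ((n - 1) % 2) + brkN (fun i => lam i - 1) := by
  have hlam' : IsPartitionN (fun i => lam i - 1) :=
    fun i j hij => Nat.sub_le_sub_right (hlam i j hij) 1
  ext m
  rw [Finsupp.add_apply]
  have h1 := brkN_eq_Tz hlam m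
  have h2 := brkN_eq_Tz hlam' m
  have h3 := Tz_sub_one lam (fun i => lam i - 1) (fun i => by have := hpos i; show lam i = lam i - 1 + 1; omega) (m : ℕ)
  have h4 := Tz_one (n := n) (n - (m : ℕ)) (m : ℕ) le_rfl
  have h5 : uvec n ((n - 1) % 2) m = if (m : ℕ) % 2 = (n - 1) % 2 then 1 else 0 :=
    uvec_apply _ m
  have hm : (m : ℕ) < n := m.isLt
  rw [h4] at h3
  have goalZ : (brkN lam m : ℤ)
      = (uvec n ((n - 1) % 2) m : ℤ) + (brkN (fun i => lam i - 1) m : ℤ) := by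
    rw [h1, h2, h5]
    by_cases hc : (m : ℕ) % 2 = (n - 1) % 2
    · rw [if_pos hc]
      have h7 : (n - (m : ℕ)) % 2 = 1 := by omega
      rw [h7] at h3
      push_cast at h3 ⊢
      omega
    · rw [if_neg hc]
      have h7 : (n - (m : ℕ)) % 2 = 0 := by omega
      rw [h7] at h3
      push_cast at h3 ⊢
      omega
  exact_mod_cast goalZ

lemma brkN_sum (lam : Fin n → ℕ) (hlam : IsPartitionN lam) :
    ((brkN lam).sum fun _ e => e) = oddDeg lam := by
  have hz : ((((brkN lam).sum fun _ e => e) : ℕ) : ℤ) = ((oddDeg lam : ℕ) : ℤ) := by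
    rw [Finsupp.sum_fintype _ _ (fun _ => rfl)]
    push_cast
    rw [Finset.sum_congr rfl (fun m _ => brkN_eq_Tz hlam m)]
    have hswap : ∑ m : Fin n, Tz lam (m : ℕ)
        = ∑ j : Fin n, (if Even (j : ℕ) then (lam j : ℤ) else 0) := by
      have hstep : ∀ m : Fin n, Tz lam (m : ℕ)
          = ∑ j : Fin n, (if (m : ℕ) ≤ (j : ℕ) then (-1 : ℤ) ^ ((j : ℕ) - (m : ℕ)) * (lam j : ℤ) else 0) := by
        intro m
        rw [Tz, Finset.sum_filter]
      rw [Finset.sum_congr rfl (fun m _ => hstep m), Finset.sum_comm]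
      refine Finset.sum_congr rfl fun j _ => ?_
      have hpull : ∑ m : Fin n, (if (m : ℕ) ≤ (j : ℕ) then (-1 : ℤ) ^ ((j : ℕ) - (m : ℕ)) * (lam j : ℤ) else 0)
          = (∑ m : Fin n, (if (m : ℕ) ≤ (j : ℕ) then ((-1 : ℤ)) ^ ((j : ℕ) - (m : ℕ)) else 0)) * (lam j : ℤ) := by
        rw [Finset.sum_mul]
        refine Finset.sum_congr rfl fun m _ => ?_
        rw [ite_mul, zero_mul]
      rw [hpull, sign_sum_fin]
      by_cases hev : Even (j : ℕ)
      · rw [if_pos hev, if_pos hev, one_mul]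
      · rw [if_neg hev, if_neg hev, zero_mul]
    rw [hswap, oddDeg, ← Finset.sum_filter]
    push_cast
    rfl
  exact_mod_cast hz

lemma aux_aeval_eq_eval {σ : Type*} (x : σ → k) (p : MvPolynomial σ k) :
    aeval x p = eval x p := by rw [← coe_aeval_eq_eval]; rfl

lemma aux_eval_aeval {σ τ : Type*} (y : τ → k) (φ : σ → MvPolynomial τ k)
    (p : MvPolynomial σ k) :
    eval y (aeval φ p) = eval (fun i => eval y (φ i)) p := by
  calc eval y (aeval φ p) = aeval y (aeval φ p) := (aux_aeval_eq_eval _ _).symm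
    _ = aeval (fun i => aeval y (φ i)) p := by rw [← comp_aeval]; rfl
    _ = eval (fun i => eval y (φ i)) p := by
        simp only [aux_aeval_eq_eval]

lemma aux_factor_ne_zero (r : k) (hr : ¬ ∃ q : ℚ, q < 0 ∧ (q : k) = r) (a b : ℕ)
    (hb : 1 ≤ b) : ((a : k) * r + (b : k)) ≠ 0 := by
  intro h0
  rcases Nat.eq_zero_or_pos a with ha | ha
  · subst ha
    have h1 : (b : k) = 0 := by simpa using h0
    have h2 : b = 0 := by exact_mod_cast h1
    omega
  · apply hr
    have hane : (a : k) ≠ 0 := Nat.cast_ne_zero.mpr (by omega)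
    have hmul : (a : k) * r = -(b : k) := by linear_combination h0
    have hrval : r = -((b : k) / (a : k)) := by
      field_simp
      linear_combination hmul
    refine ⟨-((b : ℚ) / (a : ℚ)), ?_, ?_⟩
    · have hbq : (0 : ℚ) < (b : ℚ) := by exact_mod_cast hb
      have haq : (0 : ℚ) < (a : ℚ) := by exact_mod_cast ha
      have := div_pos hbq haq
      linarith
    · push_cast
      rw [hrval]

/-- extend a permutation of `Fin m` to `Fin (m+1)` fixing the last element. -/
def extP {m : ℕ} (π' : Equiv.Perm (Fin m)) : Equiv.Perm (Fin (m + 1)) where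
  toFun := fun i => Fin.lastCases (Fin.last m) (fun i' => (π' i').castSucc) i
  invFun := fun i => Fin.lastCases (Fin.last m) (fun i' => (π'.symm i').castSucc) i
  left_inv := by
    intro i
    cases i using Fin.lastCases with
    | last => simp
    | cast i' => simp
  right_inv := by
    intro i
    cases i using Fin.lastCases with
    | last => simp
    | cast i' => simp

lemma extP_castSucc {m : ℕ} (π' : Equiv.Perm (Fin m)) (i' : Fin m) :
    extP π' i'.castSucc = (π' i').castSucc := by simp [extP, Equiv.coe_fn_mk]

lemma extP_last {m : ℕ} (π' : Equiv.Perm (Fin m)) :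
    extP π' (Fin.last m) = Fin.last m := by simp [extP, Equiv.coe_fn_mk]

lemma extP_parity {m : ℕ} {π' : Equiv.Perm (Fin m)} (h : ParityPerm π') :
    ParityPerm (extP π') := by
  intro i
  cases i using Fin.lastCases with
  | last => rw [extP_last]
  | cast i' =>
    rw [extP_castSucc]
    have := h i'
    simpa using this

lemma mainZero (r : k) (D : ℕ) (h : MvPolynomial (Fin 0) k)
    (hvan : ∀ μ : Fin 0 → ℕ, IsPartitionN μ → oddDeg μ ≤ D →
      eval (fun i : Fin 0 => ((0 - 1 - (i : ℕ) : ℕ) : k) * r + (μ i : k)) h = 0) : h = 0 := by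
  have h0 := hvan (fun _ => 0) (fun i => i.elim0) (by simp [oddDeg])
  rw [eq_C_of_isEmpty h] at h0 ⊢
  rw [eval_C] at h0
  rw [h0, map_zero]

lemma mainVanishing (r : k) (hr : ¬ ∃ q : ℚ, q < 0 ∧ (q : k) = r) :
    ∀ (N n D : ℕ), n + D ≤ N →
      ∀ h : MvPolynomial (Fin n) k,
        (∀ π : Equiv.Perm (Fin n), ParityPerm π → rename π h = h) →
        h.totalDegree ≤ D →
        (∀ μ : Fin n → ℕ, IsPartitionN μ → oddDeg μ ≤ D →
          eval (fun i : Fin n => ((n - 1 - (i : ℕ) : ℕ) : k) * r + (μ i : k)) h = 0) →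
        h = 0 := by
  intro N
  induction N with
  | zero =>
    intro n D hND h _ _ hvan
    have hn : n = 0 := by omega
    subst hn
    exact mainZero r D h hvan
  | succ N IH =>
    intro n D hND h hinv hdeg hvan
    cases n with
    | zero => exact mainZero r D h hvan
    | succ m =>
      classical
      -- Step A : restriction to the hyperplane z_last = 0 (with shift by r).
      set φr : Fin (m + 1) → MvPolynomial (Fin m) k :=
        fun i => Fin.lastCases 0 (fun i' => X i' + C r) i with hφr
      set H := aeval φr h with hH
      have hHinv : ∀ π' : Equiv.Perm (Fin m), ParityPerm π' → rename π' H = H := by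
        intro π' hπ'
        have hcomp : (rename π' : MvPolynomial (Fin m) k →ₐ[k] MvPolynomial (Fin m) k).comp
              (aeval φr)
            = (aeval φr).comp
              (rename (extP π') : MvPolynomial (Fin (m+1)) k →ₐ[k] MvPolynomial (Fin (m+1)) k) := by
          apply algHom_ext
          intro i
          cases i using Fin.lastCases with
          | last =>
            simp [hφr, extP_last]
          | cast i' =>
            simp [hφr, extP_castSucc]
        have := DFunLike.congr_fun hcomp h
        simp only [AlgHom.coe_comp, Function.comp_apply] at this
        rw [hH, this, hinv (extP π') (extP_parity hπ')]
      have hHdeg : H.totalDegree ≤ D := by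
        refine le_trans (aux_totalDegree_aeval_le φr (fun i => ?_) h) hdeg
        cases i using Fin.lastCases with
        | last => simp [hφr]
        | cast i' =>
          simp only [hφr, Fin.lastCases_castSucc]
          refine (totalDegree_add _ _).trans ?_
          simp [totalDegree_X, totalDegree_C]
      have hHvan : ∀ ν : Fin m → ℕ, IsPartitionN ν → oddDeg ν ≤ D →
          eval (fun i : Fin m => ((m - 1 - (i : ℕ) : ℕ) : k) * r + (ν i : k)) H = 0 := by
        intro ν hν hνD
        set y : Fin m → k := fun i : Fin m => ((m - 1 - (i : ℕ) : ℕ) : k) * r + (ν i : k) with hy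
        set μ : Fin (m + 1) → ℕ := fun i => Fin.lastCases 0 (fun i' => ν i') i with hμ
        have hμpart : IsPartitionN μ := by
          intro i j hij
          cases j using Fin.lastCases with
          | last =>
            simp only [hμ, Fin.lastCases_last]
            exact Nat.zero_le _
          | cast j' =>
            cases i using Fin.lastCases with
            | last =>
              exfalso
              have h1 : (Fin.last m : Fin (m+1)) ≤ j'.castSucc := hij
              rw [Fin.le_def] at h1
              simp only [Fin.val_last, Fin.coe_castSucc] at h1
              have := j'.isLt
              omega
            | cast i' =>
              simp only [hμ, Fin.lastCases_castSucc]
              exact hν i' j' (Fin.castSucc_le_castSucc_iff.mp hij)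
        have hμodd : oddDeg μ = oddDeg ν := by
          rw [oddDeg, oddDeg, Finset.sum_filter, Finset.sum_filter]
          rw [Fin.sum_univ_castSucc
            (f := fun i : Fin (m+1) => if Even (i : ℕ) then μ i else 0)]
          simp only [hμ, Fin.lastCases_last, Fin.lastCases_castSucc, Fin.coe_castSucc,
            ite_self, add_zero]
        have hpoint : (fun i => eval y (φr i))
            = (fun i : Fin (m+1) => ((m + 1 - 1 - (i : ℕ) : ℕ) : k) * r + (μ i : k)) := by
          funext i
          cases i using Fin.lastCases with
          | last =>
            simp only [hφr, Fin.lastCases_last, map_zero, hμ, Fin.val_last]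
            have h1 : m + 1 - 1 - m = 0 := by omega
            rw [h1]
            simp
          | cast i' =>
            simp only [hφr, hμ, Fin.lastCases_castSucc, map_add, eval_X, eval_C, hy,
              Fin.coe_castSucc]
            have h1 : m + 1 - 1 - (i' : ℕ) = (m - 1 - (i' : ℕ)) + 1 := by
              have := i'.isLt
              omega
            rw [h1]
            push_cast
            ring
        rw [hH, aux_eval_aeval, hpoint]
        exact hvan μ hμpart (by omega)
      have hH0 : H = 0 := IH m D (by omega) H hHinv hHdeg hHvan
      -- deduce that every coefficient of h supported away from the last variable vanishes
      have hkill : ∀ d : Fin (m + 1) →₀ ℕ, d (Fin.last m) = 0 → coeff d h = 0 := by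
        intro d hd
        set φ0 : Fin (m + 1) → MvPolynomial (Fin m) k :=
          fun i => Fin.lastCases 0 (fun i' => X i') i with hφ0
        have hφ0h : aeval φ0 h = 0 := by
          have hcomp : (shE (-r)).comp (aeval φr) = (aeval φ0 :
              MvPolynomial (Fin (m+1)) k →ₐ[k] MvPolynomial (Fin m) k) := by
            apply algHom_ext
            intro i
            cases i using Fin.lastCases with
            | last => simp [hφr, hφ0]
            | cast i' =>
              simp only [AlgHom.coe_comp, Function.comp_apply, aeval_X, hφr, hφ0,
                Fin.lastCases_castSucc, map_add, shE, aeval_C, algebraMap_eq]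
              rw [map_neg]
              ring
          have := DFunLike.congr_fun hcomp h
          simp only [AlgHom.coe_comp, Function.comp_apply] at this
          rw [← this, ← hH, hH0, map_zero]
        have hψ : aeval (fun i : Fin (m+1) =>
            if i = Fin.last m then 0 else (X i : MvPolynomial (Fin (m+1)) k)) h = 0 := by
          have hcomp : ((rename Fin.castSucc : MvPolynomial (Fin m) k →ₐ[k]
                MvPolynomial (Fin (m+1)) k).comp (aeval φ0))
              = aeval (fun i : Fin (m+1) => if i = Fin.last m then 0 else (X i : MvPolynomial (Fin (m+1)) k)) := by
            apply algHom_ext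
            intro i
            cases i using Fin.lastCases with
            | last => simp [hφ0]
            | cast i' =>
              have hne : i'.castSucc ≠ Fin.last m := Fin.ne_of_lt (Fin.castSucc_lt_last i')
              simp [hφ0, hne]
          have := DFunLike.congr_fun hcomp h
          simp only [AlgHom.coe_comp, Function.comp_apply] at this
          rw [← this, hφ0h, map_zero]
        have := killAt_coeff (Fin.last m) h d hd
        rw [hψ, coeff_zero] at this
        exact this.symm
      -- Step B : divisibility by the product of the variables in the parity class of the last one
      set u : Fin (m + 1) →₀ ℕ := uvec (m + 1) (m % 2) with hu
      have hud : ∀ d : Fin (m + 1) →₀ ℕ, coeff d h ≠ 0 → u ≤ d := by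
        intro d hd
        rw [Finsupp.le_def]
        intro i
        rw [hu, uvec_apply]
        by_cases hc : (i : ℕ) % 2 = m % 2
        · rw [if_pos hc]
          suffices hne : d i ≠ 0 by omega
          intro h0
          set π := Equiv.swap i (Fin.last m) with hπdef
          have hπ : ParityPerm π := by
            intro x
            rcases eq_or_ne x i with rfl | hx1
            · rw [hπdef, Equiv.swap_apply_left, Fin.val_last, ← hc]
            · rcases eq_or_ne x (Fin.last m) with rfl | hx2
              · rw [hπdef, Equiv.swap_apply_right, hc, Fin.val_last]
              · rw [hπdef, Equiv.swap_apply_of_ne_of_ne hx1 hx2]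
          have hπh := hinv π hπ
          have hcoeff := coeff_rename_mapDomain π (Equiv.injective π) h d
          rw [hπh] at hcoeff
          have hmaplast : (Finsupp.mapDomain π d) (Fin.last m) = d i := by
            have h1 : Fin.last m = π i := by rw [hπdef, Equiv.swap_apply_left]
            rw [h1, Finsupp.mapDomain_apply (Equiv.injective π)]
          have h2 := hkill (Finsupp.mapDomain (⇑π) d) (by rw [hmaplast, h0])
          rw [h2] at hcoeff
          exact hd hcoeff.symm
        · rw [if_neg hc]
          exact Nat.zero_le _
      obtain ⟨h₁, hh, hcq⟩ := monomial_dvd_of_coeff hud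
      have husum : (u.sum fun _ e => e)
          = (Finset.univ.filter fun i : Fin (m+1) => (i : ℕ) % 2 = m % 2).card := by
        rw [hu, uvec_sum]
      have hm₀pos : 0 < (Finset.univ.filter fun i : Fin (m+1) => (i : ℕ) % 2 = m % 2).card := by
        refine Finset.card_pos.mpr ⟨Fin.last m, Finset.mem_filter.mpr ⟨Finset.mem_univ _, ?_⟩⟩
        rw [Fin.val_last]
      set m₀ := (Finset.univ.filter fun i : Fin (m+1) => (i : ℕ) % 2 = m % 2).card with hm₀
      rcases lt_or_ge D m₀ with hDm | hDm
      · -- degree too small : h = 0 outright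
        apply MvPolynomial.ext
        intro d
        rw [coeff_zero]
        by_contra hd
        have hle := hud d hd
        have hsums : (u.sum fun _ e => e) ≤ (d.sum fun _ e => e) := by
          rw [Finsupp.sum_fintype _ _ (fun _ => rfl), Finsupp.sum_fintype _ _ (fun _ => rfl)]
          exact Finset.sum_le_sum fun i _ => Finsupp.le_def.mp hle i
        have hdle : (d.sum fun _ e => e) ≤ D :=
          le_trans (le_totalDegree (Finsupp.mem_support_iff.mpr hd)) hdeg
        omega
      · -- main case
        have hdeg1 : h₁.totalDegree ≤ D - m₀ := by
          rw [totalDegree]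
          refine Finset.sup_le fun d hd => ?_
          have hcd : coeff (u + d) h ≠ 0 := by
            rw [← hcq d]
            exact Finsupp.mem_support_iff.mp hd
          have hsle : ((u + d).sum fun _ e => e) ≤ D :=
            le_trans (le_totalDegree (Finsupp.mem_support_iff.mpr hcd)) hdeg
          rw [Finsupp.sum_add_index' (fun _ => rfl) (fun _ _ _ => rfl)] at hsle
          have := husum
          show (d.sum fun _ e => e) ≤ D - m₀
          omega
        have hinv1 : ∀ π : Equiv.Perm (Fin (m+1)), ParityPerm π → rename π h₁ = h₁ := by
          intro π hπ
          have h2 : monomial u 1 * rename π h₁ = monomial u 1 * h₁ := by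
            conv_lhs => rw [← rename_monomial_uvec hπ (m % 2), ← hu, ← map_mul, ← hh,
              hinv π hπ, hh]
          exact mul_left_cancel₀ (by rw [Ne, monomial_eq_zero]; exact one_ne_zero) h2
        set h₂ := shE 1 h₁ with hh₂
        have hinv2 : ∀ π : Equiv.Perm (Fin (m+1)), ParityPerm π → rename π h₂ = h₂ := by
          intro π hπ
          rw [hh₂, rename_shE, hinv1 π hπ]
        have hdeg2 : h₂.totalDegree ≤ D - m₀ :=
          le_trans (totalDegree_shE_le _ _) hdeg1
        have hcard : (Finset.univ.filter fun i : Fin (m+1) => Even (i : ℕ)).card = m₀ := by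
          have hc' := card_parity (m + 1)
          simp only [Nat.add_sub_cancel] at hc'
          rw [hm₀, ← hc']
        have hvan2 : ∀ ν : Fin (m+1) → ℕ, IsPartitionN ν → oddDeg ν ≤ D - m₀ →
            eval (fun i : Fin (m+1) => ((m + 1 - 1 - (i : ℕ) : ℕ) : k) * r + (ν i : k)) h₂ = 0 := by
          intro ν hν hνD
          set μ : Fin (m+1) → ℕ := fun i => ν i + 1 with hμ
          have hμpart : IsPartitionN μ := fun i j hij => by
            simp only [hμ]
            exact Nat.add_le_add_right (hν i j hij) 1
          have hμodd : oddDeg μ ≤ D := by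
            have := oddDeg_succ ν
            rw [hcard] at this
            have h3 : oddDeg μ = oddDeg ν + m₀ := this
            omega
          have h0 := hvan μ hμpart hμodd
          rw [hh, map_mul] at h0
          have hprodne : eval (fun i : Fin (m+1) => ((m + 1 - 1 - (i : ℕ) : ℕ) : k) * r + (μ i : k))
              (monomial u 1 : MvPolynomial (Fin (m+1)) k) ≠ 0 := by
            rw [hu, ← prod_X_filter (m % 2), map_prod]
            refine Finset.prod_ne_zero_iff.mpr fun i hi => ?_
            rw [eval_X]
            exact aux_factor_ne_zero r hr _ _ (show 1 ≤ ν i + 1 by omega)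
          have h1eval : eval (fun i : Fin (m+1) => ((m + 1 - 1 - (i : ℕ) : ℕ) : k) * r + (μ i : k)) h₁
              = 0 := by
            rcases mul_eq_zero.mp h0 with h' | h'
            · exact absurd h' hprodne
            · exact h'
          rw [hh₂, eval_shE]
          have hpt : (fun i : Fin (m+1) => ((m + 1 - 1 - (i : ℕ) : ℕ) : k) * r + (ν i : k) + 1)
              = (fun i : Fin (m+1) => ((m + 1 - 1 - (i : ℕ) : ℕ) : k) * r + (μ i : k)) := by
            funext i
            simp only [hμ]
            push_cast
            ring
          rw [hpt]
          exact h1eval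
        have hh₂0 : h₂ = 0 := IH (m + 1) (D - m₀) (by omega) h₂ hinv2 hdeg2 hvan2
        have hh₁0 : h₁ = 0 := by
          have hcancel := shE_neg_cancel (-1 : k) h₁
          rw [neg_neg] at hcancel
          rw [← hcancel, ← hh₂, hh₂0, map_zero]
        rw [hh, hh₁0, mul_zero]

end Aux

variable {k : Type*} [Field k] [CharZero k] {n : ℕ}

/-- The defining properties of `R_λ`: `W`-invariance, degree `≤ |λ|_odd`, the coefficient
of `z^{[λ]}` equals `1`, and vanishing at `ρ + μ` for all partitions `μ ≠ λ` with
`|μ|_odd ≤ |λ|_odd`. -/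
def IsShiftedR (rho : Fin n → k) (lam : Fin n → ℕ) (f : MvPolynomial (Fin n) k) : Prop :=
  (∀ π : Equiv.Perm (Fin n), ParityPerm π → rename π f = f) ∧
  f.totalDegree ≤ oddDeg lam ∧
  coeff (brkN lam) f = 1 ∧
  ∀ mu : Fin n → ℕ, IsPartitionN mu → oddDeg mu ≤ oddDeg lam → mu ≠ lam →
    eval (fun i => rho i + (mu i : k)) f = 0

/-- The recursion `R_λ(z) = (∏_{i : n−i even} z_i) · R_{λ−δ}(z−δ)`, valid for partitions
with `λ_n ≥ 1`, where `δ = (1,…,1)`. (0-based: the product is over `i ≡ n−1 mod 2`.) -/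
theorem shiftedR_recursion (hn : 1 ≤ n) (r : k)
    (hr : ¬ ∃ q : ℚ, q < 0 ∧ (q : k) = r)
    (rho : Fin n → k) (hrho : ∀ i : Fin n, rho i = ((n - 1 - (i : ℕ) : ℕ) : k) * r)
    (lam : Fin n → ℕ) (hlam : IsPartitionN lam) (hpos : 1 ≤ lam ⟨n - 1, by omega⟩)
    (f g : MvPolynomial (Fin n) k)
    (hf : IsShiftedR rho lam f)
    (hg : IsShiftedR rho (fun i => lam i - 1) g) :
    f = (∏ i ∈ Finset.univ.filter (fun i : Fin n => (i : ℕ) % 2 = (n - 1) % 2), X i) *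
          aeval (fun i => X i - 1 : Fin n → MvPolynomial (Fin n) k) g := by
  classical
  obtain ⟨hf1, hf2, hf3, hf4⟩ := hf
  obtain ⟨hg1, hg2, hg3, hg4⟩ := hg
  have hposall : ∀ i, 1 ≤ lam i := by
    intro i
    have hle : i ≤ (⟨n - 1, by omega⟩ : Fin n) := by
      rw [Fin.le_def]
      show (i : ℕ) ≤ n - 1
      have := i.isLt
      omega
    have := hlam i ⟨n - 1, by omega⟩ hle
    omega
  have hlam' : IsPartitionN (fun i => lam i - 1) :=
    fun i j hij => Nat.sub_le_sub_right (hlam i j hij) 1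
  set P := (∏ i ∈ Finset.univ.filter (fun i : Fin n => (i : ℕ) % 2 = (n - 1) % 2),
      (X i : MvPolynomial (Fin n) k)) *
      aeval (fun i => X i - 1 : Fin n → MvPolynomial (Fin n) k) g with hP
  have hGsh : aeval (fun i => X i - 1 : Fin n → MvPolynomial (Fin n) k) g = shE (-1) g := by
    have hfun : (fun i => X i - 1 : Fin n → MvPolynomial (Fin n) k)
        = (fun i => X i + C (-1)) := by
      funext i
      rw [map_neg, C_1, sub_eq_add_neg]
    rw [shE, hfun]
  have hPalt : P = monomial (uvec n ((n - 1) % 2)) 1 * shE (-1) g := by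
    rw [hP, prod_X_filter, hGsh]
  have hcard : (Finset.univ.filter fun i : Fin n => Even (i : ℕ)).card
      = (Finset.univ.filter fun i : Fin n => (i : ℕ) % 2 = (n - 1) % 2).card :=
    (card_parity n).symm
  have hOdd : oddDeg lam = oddDeg (fun i => lam i - 1)
      + (Finset.univ.filter fun i : Fin n => (i : ℕ) % 2 = (n - 1) % 2).card := by
    rw [oddDeg_pred lam hposall, hcard]
  -- invariance of P
  have hPinv : ∀ π : Equiv.Perm (Fin n), ParityPerm π → rename π P = P := by
    intro π hπ
    rw [hPalt, map_mul, rename_monomial_uvec hπ, rename_shE, hg1 π hπ]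
  -- degree of P
  have hPdeg : P.totalDegree ≤ oddDeg lam := by
    rw [hPalt]
    refine le_trans (totalDegree_mul _ _) ?_
    have h1 : (monomial (uvec n ((n - 1) % 2)) (1 : k)).totalDegree
        ≤ (Finset.univ.filter fun i : Fin n => (i : ℕ) % 2 = (n - 1) % 2).card := by
      refine le_trans (aux_totalDegree_monomial_le _ _) ?_
      rw [uvec_sum]
    have h2 : (shE (-1) g).totalDegree ≤ oddDeg (fun i => lam i - 1) :=
      le_trans (totalDegree_shE_le _ _) hg2
    omega
  -- coefficient of P
  have hPcoeff : coeff (brkN lam) P = 1 := by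
    rw [hPalt, brkN_decomp lam hlam hposall, coeff_monomial_mul, one_mul,
      coeff_shE_top _ _ _ (by rw [brkN_sum _ hlam']; exact hg2), hg3]
  -- vanishing of P
  have hPvan : ∀ mu : Fin n → ℕ, IsPartitionN mu → oddDeg mu ≤ oddDeg lam → mu ≠ lam →
      eval (fun i => rho i + (mu i : k)) P = 0 := by
    intro mu hmu hmud hmune
    rcases Nat.eq_zero_or_pos (mu ⟨n - 1, by omega⟩) with hlast | hlast
    · rw [hP, map_mul]
      have hz : eval (fun i => rho i + (mu i : k))
          (∏ i ∈ Finset.univ.filter (fun i : Fin n => (i : ℕ) % 2 = (n - 1) % 2),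
            (X i : MvPolynomial (Fin n) k)) = 0 := by
        rw [map_prod]
        refine Finset.prod_eq_zero (i := (⟨n - 1, by omega⟩ : Fin n))
          (Finset.mem_filter.mpr ⟨Finset.mem_univ _, rfl⟩) ?_
        rw [eval_X, hrho, hlast]
        simp
      rw [hz, zero_mul]
    · have hmupos : ∀ i, 1 ≤ mu i := by
        intro i
        have hle : i ≤ (⟨n - 1, by omega⟩ : Fin n) := by
          rw [Fin.le_def]
          show (i : ℕ) ≤ n - 1
          have := i.isLt
          omega
        have := hmu i ⟨n - 1, by omega⟩ hle
        omega
      have hν : IsPartitionN (fun i => mu i - 1) :=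
        fun i j hij => Nat.sub_le_sub_right (hmu i j hij) 1
      have hνodd : oddDeg (fun i => mu i - 1) ≤ oddDeg (fun i => lam i - 1) := by
        have h1 := oddDeg_pred mu hmupos
        have h2 := oddDeg_pred lam hposall
        omega
      have hνne : (fun i => mu i - 1) ≠ (fun i => lam i - 1) := by
        intro hEq
        apply hmune
        funext i
        have h3 := congrFun hEq i
        have := hmupos i
        have := hposall i
        omega
      have hgz := hg4 (fun i => mu i - 1) hν hνodd hνne
      rw [hPalt, map_mul]
      have h6 : eval (fun i => rho i + (mu i : k)) (shE (-1) g)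
          = eval (fun i => rho i + (mu i : k) + (-1)) g := eval_shE _ _ _
      have h7 : (fun i : Fin n => rho i + (mu i : k) + (-1))
          = (fun i : Fin n => rho i + ((mu i - 1 : ℕ) : k)) := by
        funext i
        rw [Nat.cast_sub (hmupos i)]
        push_cast
        ring
      rw [h6, h7]
      have h8 : eval (fun i : Fin n => rho i + ((mu i - 1 : ℕ) : k)) g = 0 := hgz
      rw [h8, mul_zero]
  -- the uniqueness argument
  have hmain := mainVanishing r hr
  have hpointconv : ∀ mu : Fin n → ℕ,
      (fun i : Fin n => ((n - 1 - (i : ℕ) : ℕ) : k) * r + (mu i : k))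
        = (fun i : Fin n => rho i + (mu i : k)) := by
    intro mu
    funext i
    rw [hrho]
  set xlam : Fin n → k := fun i => rho i + (lam i : k) with hxlam
  set w := C (eval xlam f) * (f - P) - C (eval xlam f - eval xlam P) * f with hw
  have hwinv : ∀ π : Equiv.Perm (Fin n), ParityPerm π → rename π w = w := by
    intro π hπ
    rw [hw, map_sub, map_mul, map_mul, rename_C, rename_C, map_sub, hf1 π hπ, hPinv π hπ]
  have hwdeg : w.totalDegree ≤ oddDeg lam := by
    have hfP : (f - P).totalDegree ≤ oddDeg lam := by
      rw [sub_eq_add_neg]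
      refine le_trans (totalDegree_add _ _) ?_
      rw [totalDegree_neg]
      exact max_le hf2 hPdeg
    have hb1 : (C (eval xlam f) * (f - P)).totalDegree ≤ oddDeg lam := by
      refine le_trans (totalDegree_mul _ _) ?_
      rw [totalDegree_C]
      omega
    have hb2 : (C (eval xlam f - eval xlam P) * f).totalDegree ≤ oddDeg lam := by
      refine le_trans (totalDegree_mul _ _) ?_
      rw [totalDegree_C]
      have := hf2
      omega
    rw [hw, sub_eq_add_neg]
    refine le_trans (totalDegree_add _ _) ?_
    rw [totalDegree_neg]
    exact max_le hb1 hb2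
  have hwvan : ∀ mu : Fin n → ℕ, IsPartitionN mu → oddDeg mu ≤ oddDeg lam →
      eval (fun i => rho i + (mu i : k)) w = 0 := by
    intro mu hmu hmuD
    rcases eq_or_ne mu lam with rfl | hne
    · rw [hw, map_sub, map_mul, map_mul, eval_C, eval_C, map_sub]
      have hxeq : (fun i : Fin n => rho i + (mu i : k)) = xlam := rfl
      rw [hxeq]
      ring
    · rw [hw, map_sub, map_mul, map_mul, eval_C, eval_C, map_sub,
        hf4 mu hmu hmuD hne, hPvan mu hmu hmuD hne]
      ring
  have hw0 : w = 0 := hmain (n + oddDeg lam) n (oddDeg lam) le_rfl w hwinv hwdeg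
    (fun mu h1 h2 => by rw [hpointconv mu]; exact hwvan mu h1 h2)
  have hcoeffw := congrArg (coeff (brkN lam)) hw0
  rw [hw, coeff_zero, coeff_sub, coeff_C_mul, coeff_C_mul, coeff_sub, hf3, hPcoeff] at hcoeffw
  have hb0 : eval xlam f - eval xlam P = 0 := by linear_combination -hcoeffw
  have hCv : C (eval xlam f) * (f - P) = 0 := by
    have h9 : C (eval xlam f) * (f - P)
        = w + C (eval xlam f - eval xlam P) * f := by
      rw [hw]
      ring
    rw [h9, hw0, hb0, map_zero, zero_mul]
    simp
  rcases eq_or_ne (eval xlam f) 0 with hv0 | hv0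
  · exfalso
    have hfvanall : ∀ mu : Fin n → ℕ, IsPartitionN mu → oddDeg mu ≤ oddDeg lam →
        eval (fun i => rho i + (mu i : k)) f = 0 := by
      intro mu h1 h2
      rcases eq_or_ne mu lam with rfl | hne
      · exact hv0
      · exact hf4 mu h1 h2 hne
    have hf0 : f = 0 := hmain (n + oddDeg lam) n (oddDeg lam) le_rfl f hf1 hf2
      (fun mu h1 h2 => by rw [hpointconv mu]; exact hfvanall mu h1 h2)
    rw [hf0, coeff_zero] at hf3
    exact one_ne_zero hf3.symm
  · rcases mul_eq_zero.mp hCv with hC0 | hfp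
    · exfalso
      exact hv0 (by rwa [← C_0, C_inj] at hC0)
    · rw [hP] at hfp ⊢
      exact sub_eq_zero.mp hfp
end
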